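/- arXiv:1502.06711 — 15 statements merged into one kernel-verified Lean document; each statement's English description precedes it below -/
import Mathlib

section
/- Let α, β be real numbers with 1/9 < α/β < 1 (in particular 0 < α < β). Then for every μ > 0 the cubic polynomial p_μ(λ) = αλ³ + λ² + βμλ + μ has exactly one real root, and its other two roots form a pair of nonreal complex conjugate numbers. -/
/-!
A real cubic with negative discriminant has a nonreal root `z`: if all three complex roots were
real, the discriminant `a⁴ ∏ (rᵢ - rⱼ)²` would be a square. Complex conjugation permutes the roots,
so `conj z` is another root and the remaining one is fixed by conjugation, hence real.

For `p_μ`, writing `t = α / β` and `s = β² μ`, the discriminant is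
`-μ (4 t s² - (1 + 18 t - 27 t²) s + 4)`, and this quadratic in `s` is positive because its
discriminant `-(1 - t) (9 t - 1)³` is negative for `1/9 < t < 1`.
-/

open Polynomial

open ComplexConjugate in
theorem Multiset.exists_eq_ofReal_conj_of_card_eq_three {s : Multiset ℂ}
    (hs : Multiset.card s = 3) (hconj : s.map conj = s) {z : ℂ} (hz : z ∈ s) (hzi : z.im ≠ 0) :
    ∃ x : ℝ, s = {(x : ℂ), z, star z} := by
  obtain ⟨t, rfl⟩ := Multiset.exists_cons_of_mem hz
  have hzt : conj z ∈ t := by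
    have : conj z ∈ (z ::ₘ t).map conj := Multiset.mem_map_of_mem _ (Multiset.mem_cons_self z t)
    rw [hconj, Multiset.mem_cons] at this
    exact this.resolve_left (mt Complex.conj_eq_iff_im.mp hzi)
  obtain ⟨u, rfl⟩ := Multiset.exists_cons_of_mem hzt
  obtain ⟨w, rfl⟩ : ∃ w, u = {w} := Multiset.card_eq_one.mp (by simpa using hs)
  have hw : conj w = w := by
    simpa [Multiset.cons_swap (conj z) z] using hconj
  obtain ⟨x, rfl⟩ := Complex.conj_eq_iff_real.mp hw
  exact ⟨x, (congrArg (z ::ₘ ·) (Multiset.pair_comm _ _)).trans (Multiset.cons_swap _ _ _)⟩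

theorem Polynomial.map_conj_roots_map_ofReal (p : ℝ[X]) :
    (p.map (algebraMap ℝ ℂ)).roots.map (starRingEnd ℂ) = (p.map (algebraMap ℝ ℂ)).roots := by
  rw [← (IsAlgClosed.splits _).roots_map, Polynomial.map_map]
  congr 2
  ext x
  simp

theorem Cubic.exists_nonreal_root_of_discr_neg {P : Cubic ℝ} (ha : P.a ≠ 0) (hd : P.discr < 0) :
    ∃ z ∈ (P.map (algebraMap ℝ ℂ)).roots, z.im ≠ 0 := by
  obtain ⟨r₁, r₂, r₃, h3⟩ := (Cubic.splits_iff_roots_eq_three ha).mp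
    (IsAlgClosed.splits (P.toPoly.map (algebraMap ℝ ℂ)))
  by_contra! hreal
  have hofReal : ∀ z ∈ (P.map (algebraMap ℝ ℂ)).roots, ∃ x : ℝ, (x : ℂ) = z :=
    fun z hz => ⟨z.re, Complex.ext rfl (hreal z hz).symm⟩
  have hdiscr := Cubic.discr_eq_prod_three_roots ha h3
  obtain ⟨x₁, rfl⟩ := hofReal r₁ (by simp [h3])
  obtain ⟨x₂, rfl⟩ := hofReal r₂ (by simp [h3])
  obtain ⟨x₃, rfl⟩ := hofReal r₃ (by simp [h3])
  simp only [Complex.coe_algebraMap] at hdiscr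
  norm_cast at hdiscr
  exact hd.not_ge (hdiscr ▸ by positivity)

def charCubic (α β μ : ℝ) : Cubic ℝ := ⟨α, 1, β * μ, μ⟩

theorem quadratic_pos_of_one_ninth_lt_of_lt_one {t : ℝ} (h1 : 1 / 9 < t) (h2 : t < 1) (s : ℝ) :
    0 < 4 * t * s ^ 2 - (1 + 18 * t - 27 * t ^ 2) * s + 4 := by
  have hgap : 0 < (1 - t) * (9 * t - 1) ^ 3 := mul_pos (by linarith) (pow_pos (by linarith) 3)
  have hsq : 16 * t * (4 * t * s ^ 2 - (1 + 18 * t - 27 * t ^ 2) * s + 4) =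
      (8 * t * s - (1 + 18 * t - 27 * t ^ 2)) ^ 2 + (1 - t) * (9 * t - 1) ^ 3 := by ring
  exact pos_of_mul_pos_right (hsq ▸ add_pos_of_nonneg_of_pos (sq_nonneg _) hgap) (by linarith)

theorem charCubic_discr_neg {α β μ : ℝ} (h1 : 1 / 9 < α / β) (h2 : α / β < 1) (hμ : 0 < μ) :
    (charCubic α β μ).discr < 0 := by
  set t := α / β
  have hβ : β ≠ 0 := by rintro rfl; norm_num [t] at h1
  have hα : α = t * β := (div_mul_cancel₀ α hβ).symm
  have : (charCubic α β μ).discr =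
      -μ * (4 * t * (β ^ 2 * μ) ^ 2 - (1 + 18 * t - 27 * t ^ 2) * (β ^ 2 * μ) + 4) := by
    rw [Cubic.discr, charCubic, hα]; ring
  rw [this]
  exact mul_neg_of_neg_of_pos (neg_neg_of_pos hμ)
    (quadratic_pos_of_one_ninth_lt_of_lt_one h1 h2 _)

theorem Cubic.exists_roots_eq_of_discr_neg {P : Cubic ℝ} (ha : P.a ≠ 0) (hd : P.discr < 0) :
    ∃ (x : ℝ) (z : ℂ), z.im ≠ 0 ∧ (P.map (algebraMap ℝ ℂ)).roots = {(x : ℂ), z, star z} := by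
  obtain ⟨z, hz, hzi⟩ := Cubic.exists_nonreal_root_of_discr_neg ha hd
  have hcard : Multiset.card (P.map (algebraMap ℝ ℂ)).roots = 3 := by
    rw [← Cubic.splits_iff_card_roots ha]
    exact IsAlgClosed.splits _
  have hconj := Cubic.map_roots (φ := algebraMap ℝ ℂ) (P := P) ▸ P.toPoly.map_conj_roots_map_ofReal
  obtain ⟨x, hx⟩ := Multiset.exists_eq_ofReal_conj_of_card_eq_three hcard hconj hz hzi
  exact ⟨x, z, hzi, hx⟩

theorem stmt_0_general (α β : ℝ)
    (h1 : 1 / 9 < α / β) (h2 : α / β < 1)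
    (μ : ℝ) (hμ : 0 < μ) :
    ∃ (x : ℝ) (z : ℂ), z.im ≠ 0 ∧
      (C (α : ℂ) * X ^ 3 + X ^ 2 + C ((β : ℂ) * (μ : ℂ)) * X + C (μ : ℂ)).roots =
        {(x : ℂ), z, star z} := by
  have hα : α ≠ 0 := by rintro rfl; norm_num at h1
  have hP : C (α : ℂ) * X ^ 3 + X ^ 2 + C ((β : ℂ) * (μ : ℂ)) * X + C (μ : ℂ) =
      ((charCubic α β μ).map (algebraMap ℝ ℂ)).toPoly := by
    simp [charCubic, Cubic.map, Cubic.toPoly]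
  rw [hP]
  exact Cubic.exists_roots_eq_of_discr_neg hα (charCubic_discr_neg h1 h2 hμ)

/-- For `1/9 < α/β < 1` (with `α, β > 0`, so in particular `0 < α < β`)
and every `μ > 0`, the cubic `αλ³ + λ² + βμλ + μ` has exactly one real root and
its other two roots are a pair of nonreal complex conjugate numbers. -/
theorem stmt_0 (α β : ℝ) (hα : 0 < α) (hβ : 0 < β)
    (h1 : 1 / 9 < α / β) (h2 : α / β < 1)
    (μ : ℝ) (hμ : 0 < μ) :
    ∃ (x : ℝ) (z : ℂ), z.im ≠ 0 ∧
      (C (α : ℂ) * X ^ 3 + X ^ 2 + C ((β : ℂ) * (μ : ℂ)) * X + C (μ : ℂ)).roots =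
        {(x : ℂ), z, star z} :=
  stmt_0_general α β h1 h2 μ hμ
end

section
/- Let α, β be real numbers with 0 < α/β < 1/9. Set C₁ = 27 − 18(β/α) − (β/α)² and C₂ = C₁² − 64(β/α)³. Then C₁ < 0 and C₂ > 0, so the numbers m₁ = α(−C₁ − √C₂)/(8β³) and m₂ = α(−C₁ + √C₂)/(8β³) are real and satisfy 0 < m₁ < m₂. -/
/-- For `0 < α/β < 1/9` (with `α, β > 0`), setting
`C₁ = 27 − 18(β/α) − (β/α)²` and `C₂ = C₁² − 64(β/α)³`, one has `C₁ < 0` and `C₂ > 0`,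
and the numbers `m₁ = α(−C₁ − √C₂)/(8β³)` and `m₂ = α(−C₁ + √C₂)/(8β³)` satisfy
`0 < m₁ < m₂`. -/
theorem stmt_1 (α β : ℝ) (hα : 0 < α) (hβ : 0 < β) (h : α / β < 1 / 9) :
    let C₁ : ℝ := 27 - 18 * (β / α) - (β / α) ^ 2
    let C₂ : ℝ := C₁ ^ 2 - 64 * (β / α) ^ 3
    let m₁ : ℝ := α * (-C₁ - Real.sqrt C₂) / (8 * β ^ 3)
    let m₂ : ℝ := α * (-C₁ + Real.sqrt C₂) / (8 * β ^ 3)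
    C₁ < 0 ∧ 0 < C₂ ∧ 0 < m₁ ∧ m₁ < m₂ := by
  intro C₁ C₂ m₁ m₂
  have h9 : 9 * α < β := by
    rw [div_lt_div_iff₀ hβ (by norm_num : (0:ℝ) < 9)] at h; linarith
  have hr : 9 < β / α := (lt_div_iff₀ hα).mpr (by linarith)
  have hC1 : C₁ < 0 := by
    show 27 - 18 * (β / α) - (β / α) ^ 2 < 0
    nlinarith [sq_nonneg (β / α)]
  have hfac : C₂ = (β / α - 9) ^ 3 * (β / α - 1) := by
    show (27 - 18 * (β / α) - (β / α) ^ 2) ^ 2 - 64 * (β / α) ^ 3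
        = (β / α - 9) ^ 3 * (β / α - 1)
    ring
  have hC2 : 0 < C₂ := by
    rw [hfac]
    exact mul_pos (pow_pos (by linarith) 3) (by linarith)
  have hsqrt_pos : 0 < Real.sqrt C₂ := Real.sqrt_pos.mpr hC2
  have hsqrt_lt : Real.sqrt C₂ < -C₁ := by
    rw [Real.sqrt_lt' (by linarith)]
    have hr3 : 0 < (β / α) ^ 3 := pow_pos (div_pos hβ hα) 3
    show C₁ ^ 2 - 64 * (β / α) ^ 3 < (-C₁) ^ 2
    nlinarith
  have hden : (0:ℝ) < 8 * β ^ 3 := by positivity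
  refine ⟨hC1, hC2, ?_, ?_⟩
  · exact div_pos (mul_pos hα (by linarith)) hden
  · have : α * (-C₁ - Real.sqrt C₂) < α * (-C₁ + Real.sqrt C₂) :=
      mul_lt_mul_of_pos_left (by linarith) hα
    exact div_lt_div_of_pos_right this hden
end

section
/- Let α, β be real numbers with 0 < α/β < 1/9, and let m₁ < m₂ be as defined (the positive roots of the quadratic (4β³/α)μ² + C₁μ + 4/α² with C₁ = 27 − 18(β/α) − (β/α)²). Then for every μ with m₁ < μ < m₂, the cubic p_μ(λ) = αλ³ + λ² + βμλ + μ has three distinct real roots; and for every μ > 0 with μ < m₁ or μ > m₂, the cubic p_μ has exactly one real root and a pair of nonreal complex conjugate roots. -/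
/-!
The complex roots of a real cubic are either all real or one real root and a conjugate pair.
Expressed through the roots, the discriminant is a real square in the first case (nonzero iff the
roots are distinct) and minus a real square in the second, so its sign decides between the cases.
For `p_μ` the discriminant is `-α²μ` times the quadratic whose roots are `m₁, m₂`, that is
`4αβ³ μ (μ - m₁) (m₂ - μ)`, which is positive between the roots and negative outside them.
-/

open Polynomial ComplexConjugate

theorem quadratic_eq_mul_sub_mul_sub {R : Type*} [CommRing R] [IsDomain R] {a b c m₁ m₂ : R}
    (hm : m₁ ≠ m₂) (h₁ : a * m₁ ^ 2 + b * m₁ + c = 0) (h₂ : a * m₂ ^ 2 + b * m₂ + c = 0)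
    (x : R) : a * x ^ 2 + b * x + c = a * (x - m₁) * (x - m₂) := by
  have hb : b = -a * (m₁ + m₂) :=
    mul_right_cancel₀ (sub_ne_zero.2 hm) (by linear_combination h₁ - h₂)
  linear_combination h₁ + (x - m₁) * hb

namespace Complex

theorem ofReal_re_of_im_eq_zero {z : ℂ} (h : z.im = 0) : (z.re : ℂ) = z :=
  conj_eq_iff_re.mp (conj_eq_iff_im.mpr h)

theorem map_conj_roots_map_ofReal (p : ℝ[X]) :
    (p.map (algebraMap ℝ ℂ)).roots.map conj = (p.map (algebraMap ℝ ℂ)).roots := by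
  rw [← (IsAlgClosed.splits _).roots_map, Polynomial.map_map]
  congr 2
  ext x
  simp

theorem exists_ofReal_triple_or_conj_pair {s : Multiset ℂ} (hcard : Multiset.card s = 3)
    (hconj : s.map conj = s) :
    (∃ x y z : ℝ, s = {(x : ℂ), (y : ℂ), (z : ℂ)}) ∨
      ∃ (x : ℝ) (z : ℂ), z.im ≠ 0 ∧ s = {(x : ℂ), z, star z} := by
  by_cases hreal : ∀ z ∈ s, z.im = 0
  · left
    obtain ⟨x, y, z, rfl⟩ := Multiset.card_eq_three.mp hcard
    simp only [Multiset.insert_eq_cons, Multiset.mem_cons, Multiset.mem_singleton,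
      forall_eq_or_imp, forall_eq] at hreal
    obtain ⟨hx, hy, hz⟩ := hreal
    exact ⟨x.re, y.re, z.re, by
      rw [ofReal_re_of_im_eq_zero hx, ofReal_re_of_im_eq_zero hy, ofReal_re_of_im_eq_zero hz]⟩
  · right
    push Not at hreal
    obtain ⟨w, hw, hwim⟩ := hreal
    have hw' : conj w ∈ s := hconj ▸ Multiset.mem_map_of_mem _ hw
    have hne : w ≠ conj w := fun h => hwim (conj_eq_iff_im.mp h.symm)
    have hle : ({w, conj w} : Multiset ℂ) ≤ s := by
      rw [Multiset.le_iff_subset (by simpa using hne)]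
      simp [Multiset.subset_iff, hw, hw']
    obtain ⟨t, rfl⟩ := Multiset.le_iff_exists_add.mp hle
    obtain ⟨r, rfl⟩ : ∃ r, t = {r} := Multiset.card_eq_one.mp (by simpa using hcard)
    -- `r` is real because the sum of a conjugation-invariant multiset is real
    have hr : r.im = 0 := by
      have hsum := congrArg (fun s => s.sum.im) hconj
      simp only [Multiset.insert_eq_cons, Multiset.cons_add, Multiset.singleton_add,
        Multiset.map_cons, Multiset.map_singleton, Multiset.sum_cons, Multiset.sum_singleton,
        add_im, conj_im, conj_conj] at hsum
      linarith
    refine ⟨r.re, w, hwim, ?_⟩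
    rw [ofReal_re_of_im_eq_zero hr, add_comm, Multiset.singleton_add]
    rfl

end Complex

namespace Cubic

variable {P : Cubic ℝ}

theorem roots_map_ofReal_eq_or (ha : P.a ≠ 0) :
    (∃ x y z : ℝ, (P.map (algebraMap ℝ ℂ)).roots = {(x : ℂ), (y : ℂ), (z : ℂ)}) ∨
      ∃ (x : ℝ) (z : ℂ), z.im ≠ 0 ∧ (P.map (algebraMap ℝ ℂ)).roots = {(x : ℂ), z, star z} := by
  apply Complex.exists_ofReal_triple_or_conj_pair
  · exact (splits_iff_card_roots ha).mp (IsAlgClosed.splits _)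
  · rw [map_roots]
    exact Complex.map_conj_roots_map_ofReal _

theorem discr_eq_of_roots_map_ofReal (ha : P.a ≠ 0) {x y z : ℝ}
    (h3 : (P.map (algebraMap ℝ ℂ)).roots = {(x : ℂ), (y : ℂ), (z : ℂ)}) :
    P.discr = (P.a ^ 2 * (x - y) * (x - z) * (y - z)) ^ 2 := by
  apply Complex.ofReal_injective
  have := discr_eq_prod_three_roots ha h3
  simp only [Complex.coe_algebraMap] at this
  push_cast
  linear_combination this

theorem discr_eq_of_roots_map_ofReal_conj_pair (ha : P.a ≠ 0) {x : ℝ} {z : ℂ}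
    (h3 : (P.map (algebraMap ℝ ℂ)).roots = {(x : ℂ), z, star z}) :
    P.discr = -(2 * P.a ^ 2 * Complex.normSq (x - z) * z.im) ^ 2 := by
  apply Complex.ofReal_injective
  have hnorm : ((x : ℂ) - z) * (x - star z) = Complex.normSq (x - z) := by
    rw [← Complex.mul_conj, map_sub, Complex.conj_ofReal]
    rfl
  have hdiff : z - star z = (2 * z.im : ℝ) * Complex.I := Complex.sub_conj z
  have hprod := discr_eq_prod_three_roots ha h3
  simp only [Complex.coe_algebraMap] at hprod
  rw [hprod, show (P.a : ℂ) * P.a * (x - z) * (x - star z) * (z - star z)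
    = P.a ^ 2 * ((x - z) * (x - star z)) * (z - star z) by ring, hnorm, hdiff]
  push_cast
  linear_combination (2 * (P.a : ℂ) ^ 2 * Complex.normSq (x - z) * z.im) ^ 2 * Complex.I_sq

theorem exists_roots_map_ofReal_of_discr_pos (ha : P.a ≠ 0) (hP : 0 < P.discr) :
    ∃ x y z : ℝ, x ≠ y ∧ x ≠ z ∧ y ≠ z ∧
      (P.map (algebraMap ℝ ℂ)).roots = {(x : ℂ), (y : ℂ), (z : ℂ)} := by
  rcases roots_map_ofReal_eq_or ha with ⟨x, y, z, h3⟩ | ⟨x, z, -, h3⟩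
  · obtain ⟨hxy, hxz, hyz⟩ := (discr_ne_zero_iff_roots_ne ha h3).mp hP.ne'
    exact ⟨x, y, z, fun h => hxy (congrArg _ h), fun h => hxz (congrArg _ h),
      fun h => hyz (congrArg _ h), h3⟩
  · rw [discr_eq_of_roots_map_ofReal_conj_pair ha h3] at hP
    exact absurd hP (neg_nonpos.mpr (sq_nonneg _)).not_gt

theorem exists_roots_map_ofReal_conj_pair_of_discr_neg (ha : P.a ≠ 0) (hP : P.discr < 0) :
    ∃ (x : ℝ) (z : ℂ), z.im ≠ 0 ∧ (P.map (algebraMap ℝ ℂ)).roots = {(x : ℂ), z, star z} := by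
  rcases roots_map_ofReal_eq_or ha with ⟨x, y, z, h3⟩ | h
  · rw [discr_eq_of_roots_map_ofReal ha h3] at hP
    exact absurd hP (sq_nonneg _).not_gt
  · exact h

end Cubic

def cubicP (α β μ : ℝ) : Cubic ℝ := ⟨α, 1, β * μ, μ⟩

theorem roots_map_ofReal_cubicP (α β μ : ℝ) :
    ((cubicP α β μ).map (algebraMap ℝ ℂ)).roots =
      (C (α : ℂ) * X ^ 3 + X ^ 2 + C ((β : ℂ) * (μ : ℂ)) * X + C (μ : ℂ)).roots := by
  simp [Cubic.roots, Cubic.map, Cubic.toPoly, cubicP]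

theorem discr_cubicP {α : ℝ} (hα : α ≠ 0) (β μ : ℝ) :
    (cubicP α β μ).discr = -(α ^ 2 * μ) *
      ((4 * β ^ 3 / α) * μ ^ 2 + (27 - 18 * (β / α) - (β / α) ^ 2) * μ + 4 / α ^ 2) := by
  simp only [cubicP, Cubic.discr]
  field_simp
  ring

theorem stmt_2_general (α β : ℝ) (hα : 0 < α) (hβ : 0 < β)
    (m₁ m₂ : ℝ) (hm₁pos : 0 < m₁) (hm₁₂ : m₁ < m₂)
    (hq₁ : (4 * β ^ 3 / α) * m₁ ^ 2 + (27 - 18 * (β / α) - (β / α) ^ 2) * m₁ + 4 / α ^ 2 = 0)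
    (hq₂ : (4 * β ^ 3 / α) * m₂ ^ 2 + (27 - 18 * (β / α) - (β / α) ^ 2) * m₂ + 4 / α ^ 2 = 0) :
    (∀ μ : ℝ, m₁ < μ → μ < m₂ →
      ∃ x y z : ℝ, x ≠ y ∧ x ≠ z ∧ y ≠ z ∧
        (C (α : ℂ) * X ^ 3 + X ^ 2 + C ((β : ℂ) * (μ : ℂ)) * X + C (μ : ℂ)).roots =
          {(x : ℂ), (y : ℂ), (z : ℂ)}) ∧
    (∀ μ : ℝ, 0 < μ → (μ < m₁ ∨ m₂ < μ) →
      ∃ (x : ℝ) (z : ℂ), z.im ≠ 0 ∧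
        (C (α : ℂ) * X ^ 3 + X ^ 2 + C ((β : ℂ) * (μ : ℂ)) * X + C (μ : ℂ)).roots =
          {(x : ℂ), z, star z}) := by
  have hdiscr (μ : ℝ) :
      (cubicP α β μ).discr = 4 * α * β ^ 3 * μ * (μ - m₁) * (m₂ - μ) := by
    rw [discr_cubicP hα.ne', quadratic_eq_mul_sub_mul_sub hm₁₂.ne hq₁ hq₂]
    field_simp
    ring
  have hk : 0 < 4 * α * β ^ 3 := by positivity
  refine ⟨fun μ h₁ h₂ => ?_, fun μ hμ hout => ?_⟩
  · rw [← roots_map_ofReal_cubicP]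
    refine Cubic.exists_roots_map_ofReal_of_discr_pos hα.ne' ?_
    rw [hdiscr]
    exact mul_pos (mul_pos (mul_pos hk (hm₁pos.trans h₁)) (sub_pos.2 h₁)) (sub_pos.2 h₂)
  · rw [← roots_map_ofReal_cubicP]
    refine Cubic.exists_roots_map_ofReal_conj_pair_of_discr_neg hα.ne' ?_
    rw [hdiscr]
    rcases hout with h | h
    · exact mul_neg_of_neg_of_pos (mul_neg_of_pos_of_neg (mul_pos hk hμ) (sub_neg.2 h))
        (sub_pos.2 (h.trans hm₁₂))
    · exact mul_neg_of_pos_of_neg (mul_pos (mul_pos hk hμ) (sub_pos.2 (hm₁₂.trans h)))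
        (sub_neg.2 h)

/-- For `0 < α/β < 1/9` (with `α, β > 0`), let `0 < m₁ < m₂` be the
positive roots of the quadratic `(4β³/α)μ² + C₁μ + 4/α²` with
`C₁ = 27 − 18(β/α) − (β/α)²`. Then for every `μ` with `m₁ < μ < m₂` the cubic
`αλ³ + λ² + βμλ + μ` has three distinct real roots, and for every `μ > 0` with
`μ < m₁` or `μ > m₂` it has exactly one real root and a pair of nonreal complex
conjugate roots. -/
theorem stmt_2 (α β : ℝ) (hα : 0 < α) (hβ : 0 < β) (h : α / β < 1 / 9)
    (m₁ m₂ : ℝ) (hm₁pos : 0 < m₁) (hm₁₂ : m₁ < m₂)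
    (hq₁ : (4 * β ^ 3 / α) * m₁ ^ 2 + (27 - 18 * (β / α) - (β / α) ^ 2) * m₁ + 4 / α ^ 2 = 0)
    (hq₂ : (4 * β ^ 3 / α) * m₂ ^ 2 + (27 - 18 * (β / α) - (β / α) ^ 2) * m₂ + 4 / α ^ 2 = 0) :
    (∀ μ : ℝ, m₁ < μ → μ < m₂ →
      ∃ x y z : ℝ, x ≠ y ∧ x ≠ z ∧ y ≠ z ∧
        (C (α : ℂ) * X ^ 3 + X ^ 2 + C ((β : ℂ) * (μ : ℂ)) * X + C (μ : ℂ)).roots =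
          {(x : ℂ), (y : ℂ), (z : ℂ)}) ∧
    (∀ μ : ℝ, 0 < μ → (μ < m₁ ∨ m₂ < μ) →
      ∃ (x : ℝ) (z : ℂ), z.im ≠ 0 ∧
        (C (α : ℂ) * X ^ 3 + X ^ 2 + C ((β : ℂ) * (μ : ℂ)) * X + C (μ : ℂ)).roots =
          {(x : ℂ), z, star z}) :=
  stmt_2_general α β hα hβ m₁ m₂ hm₁pos hm₁₂ hq₁ hq₂
end

section
/- Let α, β be real numbers with 0 < α/β < 1/9, and let m₁ < m₂ be as defined. If μ = m₁ or μ = m₂, then the cubic p_μ(λ) = αλ³ + λ² + βμλ + μ has a real root of multiplicity exactly two together with a distinct simple real root (in particular all its roots are real and it is not a perfect cube). -/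
/-!
When the discriminant of a cubic `p = a X³ + b X² + c X + d` vanishes but `b² ≠ 3ac` (so `p` is not
a perfect cube), `p` and `p'` share the root `x = (9ad - bc) / (2(b² - 3ac))`. Vieta's formulas then
give the factorisation `p = a (X - x)² (X - y)` with `y = -b/a - 2x`; both roots are rational in
the coefficients, hence real for real coefficients.

For `p_μ = α X³ + X² + βμ X + μ` the discriminant is `-μ` times `α²` times the quadratic defining
`m₁, m₂`, and `b² = 3ac` together with a vanishing discriminant would force `bc = 9ad`, i.e.
`μ (β - 9α) = 0`, which `α/β < 1/9` and the quadratic exclude.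
-/

open Polynomial

namespace Cubic

theorem three_mul_discr_add_sq {R : Type*} [CommRing R] (P : Cubic R) :
    3 * P.discr + (P.b * P.c - 9 * P.a * P.d) ^ 2 =
      4 * (P.b ^ 2 - 3 * P.a * P.c) * (P.c ^ 2 - 3 * P.b * P.d) := by
  simp only [discr]
  ring

theorem sq_sub_three_mul_ne_zero_of_discr_eq_zero {R : Type*} [CommRing R] [IsDomain R]
    {P : Cubic R} (hdiscr : P.discr = 0) (hbc : P.b * P.c - 9 * P.a * P.d ≠ 0) :
    P.b ^ 2 - 3 * P.a * P.c ≠ 0 := by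
  intro hcube
  have := P.three_mul_discr_add_sq
  rw [hdiscr, hcube] at this
  exact hbc (pow_eq_zero_iff two_ne_zero |>.mp (by linear_combination this))

theorem discr_map {R S : Type*} [CommRing R] [CommRing S] (φ : R →+* S) (P : Cubic R) :
    (P.map φ).discr = φ P.discr := by
  simp only [discr, map, map_add, map_sub, map_mul, map_pow, map_ofNat]

theorem roots_toPoly_vieta {K : Type*} [Field K] {a x y z : K} (ha : a ≠ 0) :
    (toPoly ⟨a, a * -(x + y + z), a * (x * y + x * z + y * z), a * -(x * y * z)⟩).roots =
      {x, y, z} := by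
  rw [← C_mul_prod_X_sub_C_eq, mul_assoc, mul_assoc, roots_C_mul _ ha]
  simpa using roots_multiset_prod_X_sub_C ({x, y, z} : Multiset K)

variable {K : Type*} [Field K] (P : Cubic K)

def doubleRoot : K :=
  (9 * P.a * P.d - P.b * P.c) / (2 * (P.b ^ 2 - 3 * P.a * P.c))

def simpleRoot : K :=
  -P.b / P.a - 2 * P.doubleRoot

theorem doubleRoot_map {L : Type*} [Field L] (φ : K →+* L) :
    (P.map φ).doubleRoot = φ P.doubleRoot := by
  simp only [doubleRoot, map, map_div₀, map_sub, map_mul, map_pow, map_ofNat]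

theorem simpleRoot_map {L : Type*} [Field L] (φ : K →+* L) :
    (P.map φ).simpleRoot = φ P.simpleRoot := by
  rw [simpleRoot, simpleRoot, doubleRoot_map]
  simp only [map, map_sub, map_div₀, map_neg, map_mul, map_ofNat]

variable {P}

theorem a_mul_simpleRoot (ha : P.a ≠ 0) :
    P.a * P.simpleRoot = -P.b - 2 * P.a * P.doubleRoot := by
  rw [simpleRoot]
  field_simp

section

variable [NeZero (2 : K)]

theorem two_mul_sq_sub_mul_doubleRoot (hcube : P.b ^ 2 - 3 * P.a * P.c ≠ 0) :
    2 * (P.b ^ 2 - 3 * P.a * P.c) * P.doubleRoot = 9 * P.a * P.d - P.b * P.c := by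
  rw [doubleRoot]
  field_simp

theorem derivative_eq_zero_at_doubleRoot (hdiscr : P.discr = 0)
    (hcube : P.b ^ 2 - 3 * P.a * P.c ≠ 0) :
    3 * P.a * P.doubleRoot ^ 2 + 2 * P.b * P.doubleRoot + P.c = 0 := by
  set D := P.b ^ 2 - 3 * P.a * P.c
  set x := P.doubleRoot
  have hx := two_mul_sq_sub_mul_doubleRoot hcube
  have key : (2 * D) ^ 2 * (3 * P.a * x ^ 2 + 2 * P.b * x + P.c) = 0 := by
    simp only [discr] at hdiscr
    linear_combination (3 * P.a * (2 * D * x + (9 * P.a * P.d - P.b * P.c)) + 4 * P.b * D) * hx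
      - 9 * P.a * hdiscr
  exact (mul_eq_zero.mp key).resolve_left (pow_ne_zero 2 (mul_ne_zero two_ne_zero hcube))

theorem eval_doubleRoot [NeZero (3 : K)] (ha : P.a ≠ 0) (hdiscr : P.discr = 0)
    (hcube : P.b ^ 2 - 3 * P.a * P.c ≠ 0) :
    P.a * P.doubleRoot ^ 3 + P.b * P.doubleRoot ^ 2 + P.c * P.doubleRoot + P.d = 0 := by
  set x := P.doubleRoot
  -- `9a p = (3a X + b) p' + 2(3ac - b²) X + (9ad - bc)`, and `x` kills the remainder.
  have key : 3 * (3 * P.a) * (P.a * x ^ 3 + P.b * x ^ 2 + P.c * x + P.d) = 0 := by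
    linear_combination (3 * P.a * x + P.b) * derivative_eq_zero_at_doubleRoot hdiscr hcube
      - two_mul_sq_sub_mul_doubleRoot hcube
  exact (mul_eq_zero.mp key).resolve_left (mul_ne_zero three_ne_zero (mul_ne_zero three_ne_zero ha))

theorem doubleRoot_ne_simpleRoot (ha : P.a ≠ 0) (hdiscr : P.discr = 0)
    (hcube : P.b ^ 2 - 3 * P.a * P.c ≠ 0) : P.doubleRoot ≠ P.simpleRoot := by
  intro hxy
  have hy := a_mul_simpleRoot ha
  rw [← hxy] at hy
  apply hcube
  linear_combination (3 * P.a * P.doubleRoot + P.b) * hy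
    - 3 * P.a * derivative_eq_zero_at_doubleRoot hdiscr hcube

theorem roots_toPoly_of_discr_eq_zero [NeZero (3 : K)] (ha : P.a ≠ 0) (hdiscr : P.discr = 0)
    (hcube : P.b ^ 2 - 3 * P.a * P.c ≠ 0) :
    P.toPoly.roots = {P.doubleRoot, P.doubleRoot, P.simpleRoot} := by
  have hy := a_mul_simpleRoot ha
  have hder := derivative_eq_zero_at_doubleRoot hdiscr hcube
  have heval := eval_doubleRoot ha hdiscr hcube
  set x := P.doubleRoot
  set y := P.simpleRoot
  have hvieta : P = ⟨P.a, P.a * -(x + x + y), P.a * (x * x + x * y + x * y), P.a * -(x * x * y)⟩ :=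
    Cubic.ext rfl (by linear_combination hy) (by linear_combination -2 * x * hy + hder)
      (by linear_combination x ^ 2 * hy + heval - x * hder)
  rw [hvieta]
  exact roots_toPoly_vieta ha

end

theorem roots_map_toPoly_of_discr_eq_zero {L : Type*} [Field L] [NeZero (2 : L)] [NeZero (3 : L)]
    (φ : K →+* L) (ha : P.a ≠ 0) (hdiscr : P.discr = 0) (hcube : P.b ^ 2 - 3 * P.a * P.c ≠ 0) :
    (P.toPoly.map φ).roots = {φ P.doubleRoot, φ P.doubleRoot, φ P.simpleRoot} := by
  rw [← map_toPoly, ← doubleRoot_map, ← simpleRoot_map]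
  refine roots_toPoly_of_discr_eq_zero ((map_ne_zero φ).mpr ha) ?_ ?_
  · rw [discr_map, hdiscr, map_zero]
  · simpa only [map, map_sub, map_mul, map_pow, map_ofNat] using (map_ne_zero φ).mpr hcube

theorem discr_mk_one {R : Type*} [CommRing R] (α β μ : R) :
    (⟨α, 1, β * μ, μ⟩ : Cubic R).discr =
      -μ * (4 * α * β ^ 3 * μ ^ 2 + (27 * α ^ 2 - 18 * α * β - β ^ 2) * μ + 4) := by
  simp only [discr]
  ring

end Cubic

theorem stmt_3_general (α β : ℝ) (hα : 0 < α) (h : α / β < 1 / 9)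
    (m₁ m₂ : ℝ)
    (hq₁ : (4 * β ^ 3 / α) * m₁ ^ 2 + (27 - 18 * (β / α) - (β / α) ^ 2) * m₁ + 4 / α ^ 2 = 0)
    (hq₂ : (4 * β ^ 3 / α) * m₂ ^ 2 + (27 - 18 * (β / α) - (β / α) ^ 2) * m₂ + 4 / α ^ 2 = 0)
    (μ : ℝ) (hμ : μ = m₁ ∨ μ = m₂) :
    ∃ x y : ℝ, x ≠ y ∧
      (C (α : ℂ) * X ^ 3 + X ^ 2 + C ((β : ℂ) * (μ : ℂ)) * X + C (μ : ℂ)).roots =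
        {(x : ℂ), (x : ℂ), (y : ℂ)} := by
  have hq : (4 * β ^ 3 / α) * μ ^ 2 + (27 - 18 * (β / α) - (β / α) ^ 2) * μ + 4 / α ^ 2 = 0 := by
    rcases hμ with rfl | rfl <;> assumption
  have hE : 4 * α * β ^ 3 * μ ^ 2 + (27 * α ^ 2 - 18 * α * β - β ^ 2) * μ + 4 = 0 := by
    field_simp at hq
    linear_combination hq
  have hμ0 : μ ≠ 0 := by
    rintro rfl
    norm_num at hE
  have hβ9 : β - 9 * α ≠ 0 := by
    intro hβ9
    rw [show β = 9 * α by linear_combination hβ9, div_mul_cancel_right₀ hα.ne'] at h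
    norm_num at h
  let P : Cubic ℝ := ⟨α, 1, β * μ, μ⟩
  have hdiscr : P.discr = 0 := by rw [Cubic.discr_mk_one, hE, mul_zero]
  have hbc : P.b * P.c - 9 * P.a * P.d = μ * (β - 9 * α) := by
    simp only [P]
    ring
  have hcube : P.b ^ 2 - 3 * P.a * P.c ≠ 0 :=
    Cubic.sq_sub_three_mul_ne_zero_of_discr_eq_zero hdiscr (hbc ▸ mul_ne_zero hμ0 hβ9)
  refine ⟨P.doubleRoot, P.simpleRoot, Cubic.doubleRoot_ne_simpleRoot hα.ne' hdiscr hcube, ?_⟩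
  have hpoly : C (α : ℂ) * X ^ 3 + X ^ 2 + C ((β : ℂ) * (μ : ℂ)) * X + C (μ : ℂ) =
      P.toPoly.map Complex.ofRealHom := by
    simp [Cubic.toPoly, P]
  rw [hpoly, P.roots_map_toPoly_of_discr_eq_zero Complex.ofRealHom hα.ne' hdiscr hcube]
  rfl

/-- For `0 < α/β < 1/9` (with `α, β > 0`), let `0 < m₁ < m₂` be the
positive roots of the quadratic `(4β³/α)μ² + C₁μ + 4/α²` with
`C₁ = 27 − 18(β/α) − (β/α)²`. If `μ = m₁` or `μ = m₂`, then the cubic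
`αλ³ + λ² + βμλ + μ` has a real root of multiplicity exactly two together with a
distinct simple real root. -/
theorem stmt_3 (α β : ℝ) (hα : 0 < α) (hβ : 0 < β) (h : α / β < 1 / 9)
    (m₁ m₂ : ℝ) (hm₁pos : 0 < m₁) (hm₁₂ : m₁ < m₂)
    (hq₁ : (4 * β ^ 3 / α) * m₁ ^ 2 + (27 - 18 * (β / α) - (β / α) ^ 2) * m₁ + 4 / α ^ 2 = 0)
    (hq₂ : (4 * β ^ 3 / α) * m₂ ^ 2 + (27 - 18 * (β / α) - (β / α) ^ 2) * m₂ + 4 / α ^ 2 = 0)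
    (μ : ℝ) (hμ : μ = m₁ ∨ μ = m₂) :
    ∃ x y : ℝ, x ≠ y ∧
      (C (α : ℂ) * X ^ 3 + X ^ 2 + C ((β : ℂ) * (μ : ℂ)) * X + C (μ : ℂ)).roots =
        {(x : ℂ), (x : ℂ), (y : ℂ)} :=
  stmt_3_general α β hα h m₁ m₂ hq₁ hq₂ μ hμ
end

section
/- Let α, β, μ be real numbers with 0 < α < β and μ > 0. Then every real root λ of the cubic p_μ(λ) = αλ³ + λ² + βμλ + μ satisfies −1/α < λ < −1/β. -/
/-- For `0 < α < β` and `μ > 0`, every real root `λ` of the cubic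
`αλ³ + λ² + βμλ + μ` satisfies `−1/α < λ < −1/β`. -/
theorem stmt_5 (α β μ : ℝ) (hα : 0 < α) (hαβ : α < β) (hμ : 0 < μ)
    (l : ℝ) (hroot : α * l ^ 3 + l ^ 2 + β * μ * l + μ = 0) :
    -1 / α < l ∧ l < -1 / β := by
  have hβ : 0 < β := hα.trans hαβ
  constructor
  · by_contra h
    push_neg at h
    rw [le_div_iff₀ hα] at h
    have h1 : α * l ≤ -1 := by nlinarith
    have h2 : β * l < -1 := by nlinarith
    nlinarith [sq_nonneg l, mul_pos hμ (by linarith : (0:ℝ) < -1 - β * l)]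
  · by_contra h
    push_neg at h
    rw [div_le_iff₀ hβ] at h
    have h2 : -1 ≤ β * l := by nlinarith
    have h1 : -1 < α * l := by nlinarith
    have hl0 : l ≠ 0 := by intro h0; rw [h0] at hroot; simp at hroot; linarith
    have hl2 : 0 < l ^ 2 := by positivity
    nlinarith [mul_pos hl2 (by linarith : (0:ℝ) < α * l + 1)]
end

section
/- Let α, β, μ be real numbers with 0 < α < β and μ > 0. Then every nonreal complex root λ of the cubic p_μ(λ) = αλ³ + λ² + βμλ + μ satisfies −(1/2)(1/α − 1/β) < Re(λ) < 0. -/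
/-!
Write `λ = x + iy` with `y ≠ 0`. Dividing the imaginary part of `p_μ(λ) = 0` by `y` gives
`3αx² − αy² + 2x + βμ = 0`; eliminating `y²` with the real part leaves the real cubic
`2x(2αx + 1)² + μ(2αβx + β − α) = 0`. For `x ≥ 0` both terms are positive, so `x < 0`; then the
first term is nonpositive, which forces `2αβx + β − α > 0`, i.e. `x > −(1/2)(1/α − 1/β)`.
-/

section

variable {α β μ : ℝ}

theorem re_cubic_eq_zero_of_root {z : ℂ} (him : z.im ≠ 0)
    (hroot : (α : ℂ) * z ^ 3 + z ^ 2 + (β : ℂ) * (μ : ℂ) * z + (μ : ℂ) = 0) :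
    2 * z.re * (2 * α * z.re + 1) ^ 2 + μ * (2 * α * β * z.re + β - α) = 0 := by
  have hre := congrArg Complex.re hroot
  have hi := congrArg Complex.im hroot
  simp only [pow_succ, pow_zero, one_mul, Complex.add_re, Complex.add_im, Complex.mul_re,
    Complex.mul_im, Complex.ofReal_re, Complex.ofReal_im, Complex.zero_re,
    Complex.zero_im] at hre hi
  have him_div : 3 * α * z.re ^ 2 - α * z.im ^ 2 + 2 * z.re + β * μ = 0 := by
    refine (mul_right_inj' him).1 ?_
    linear_combination hi
  linear_combination (3 * α * z.re + 1) * him_div - α * hre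

theorem neg_of_cubic_eq_zero (hα : 0 < α) (hαβ : α < β) (hμ : 0 < μ) {x : ℝ}
    (h : 2 * x * (2 * α * x + 1) ^ 2 + μ * (2 * α * β * x + β - α) = 0) : x < 0 := by
  by_contra! hx
  have hlin : 0 < 2 * α * β * x + β - α := by
    nlinarith [mul_nonneg (mul_nonneg hα.le (hα.trans hαβ).le) hx]
  nlinarith [mul_nonneg hx (sq_nonneg (2 * α * x + 1)), mul_pos hμ hlin]

theorem linear_pos_of_cubic_eq_zero (hα : 0 < α) (hμ : 0 < μ) {x : ℝ} (hx : x < 0)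
    (h : 2 * x * (2 * α * x + 1) ^ 2 + μ * (2 * α * β * x + β - α) = 0) :
    0 < 2 * α * β * x + β - α := by
  by_contra! hlin
  -- Both terms of `h` then vanish, but `2αβx + β − α = β(2αx + 1) − α` is `−α` when `2αx + 1 = 0`.
  have hsq : (2 * α * x + 1) ^ 2 = 0 := by
    nlinarith [sq_nonneg (2 * α * x + 1), mul_nonpos_of_nonneg_of_nonpos hμ.le hlin]
  have hunit : 2 * α * x + 1 = 0 := pow_eq_zero_iff two_ne_zero |>.mp hsq
  have : μ * α = 0 := by linear_combination (2 * x * (2 * α * x + 1) + μ * β) * hunit - h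
  nlinarith [mul_pos hμ hα]

theorem neg_half_mul_inv_sub_inv_lt (hα : 0 < α) (hβ : 0 < β) {x : ℝ}
    (h : 0 < 2 * α * β * x + β - α) : -(1 / 2) * (1 / α - 1 / β) < x := by
  have hαβ : 0 < 2 * α * β := by positivity
  rw [show -(1 / 2) * (1 / α - 1 / β) = (α - β) / (2 * α * β) by field_simp; ring,
    div_lt_iff₀ hαβ]
  linarith

end

/-- For `0 < α < β` and `μ > 0`, every nonreal complex root `λ` of the
cubic `αλ³ + λ² + βμλ + μ` satisfies `−(1/2)(1/α − 1/β) < Re(λ) < 0`. -/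
theorem stmt_6 (α β μ : ℝ) (hα : 0 < α) (hαβ : α < β) (hμ : 0 < μ)
    (z : ℂ) (him : z.im ≠ 0)
    (hroot : (α : ℂ) * z ^ 3 + z ^ 2 + (β : ℂ) * (μ : ℂ) * z + (μ : ℂ) = 0) :
    -(1 / 2) * (1 / α - 1 / β) < z.re ∧ z.re < 0 := by
  have hcubic := re_cubic_eq_zero_of_root him hroot
  have hneg := neg_of_cubic_eq_zero hα hαβ hμ hcubic
  exact ⟨neg_half_mul_inv_sub_inv_lt hα (hα.trans hαβ)
    (linear_pos_of_cubic_eq_zero hα hμ hneg hcubic), hneg⟩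
end

section
/- Let α, β, μ be real numbers with 0 < α < β and μ > 0, and suppose λ = a + ib (a, b real, b ≠ 0) is a nonreal root of the cubic p_μ(λ) = αλ³ + λ² + βμλ + μ. Then a satisfies 8αa³ + 8a² + 2a(1/α + βμ) + μ(β/α − 1) = 0 and b² = (3αa² + 2a + βμ)/α; moreover, a is the unique real solution of the cubic equation 8αx³ + 8x² + 2x(1/α + βμ) + μ(β/α − 1) = 0. -/
/-- For `0 < α < β`, `μ > 0`, if `λ = a + ib` (`b ≠ 0`) is a nonreal root
of `αλ³ + λ² + βμλ + μ`, then `8αa³ + 8a² + 2a(1/α + βμ) + μ(β/α − 1) = 0` and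
`b² = (3αa² + 2a + βμ)/α`; moreover `a` is the unique real solution of the former
cubic equation. -/
theorem stmt_7 (α β μ : ℝ) (hα : 0 < α) (hαβ : α < β) (hμ : 0 < μ)
    (a b : ℝ) (hb : b ≠ 0)
    (hroot : (α : ℂ) * ((a : ℂ) + (b : ℂ) * Complex.I) ^ 3
        + ((a : ℂ) + (b : ℂ) * Complex.I) ^ 2
        + (β : ℂ) * (μ : ℂ) * ((a : ℂ) + (b : ℂ) * Complex.I) + (μ : ℂ) = 0) :
    8 * α * a ^ 3 + 8 * a ^ 2 + 2 * a * (1 / α + β * μ) + μ * (β / α - 1) = 0 ∧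
    b ^ 2 = (3 * α * a ^ 2 + 2 * a + β * μ) / α ∧
    ∀ x : ℝ, 8 * α * x ^ 3 + 8 * x ^ 2 + 2 * x * (1 / α + β * μ) + μ * (β / α - 1) = 0 →
      x = a := by
  have hα' : α ≠ 0 := ne_of_gt hα
  simp only [Complex.ext_iff, Complex.add_re, Complex.add_im, Complex.mul_re, Complex.mul_im,
    Complex.ofReal_re, Complex.ofReal_im, Complex.I_re, Complex.I_im, Complex.zero_re,
    Complex.zero_im, pow_succ, pow_zero, Complex.one_re, Complex.one_im] at hroot
  obtain ⟨hre, him⟩ := hroot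
  ring_nf at hre him
  -- imaginary part: b * (3αa² + 2a + βμ - αb²) = 0
  have hK : α * b ^ 2 = 3 * α * a ^ 2 + 2 * a + β * μ := by
    have h0 : b * (3 * α * a ^ 2 + 2 * a + β * μ - α * b ^ 2) = 0 := by linear_combination him
    rcases mul_eq_zero.mp h0 with h | h
    · exact absurd h hb
    · linarith
  have hb2 : b ^ 2 = (3 * α * a ^ 2 + 2 * a + β * μ) / α := by
    field_simp
    linear_combination hK
  have hcubic : 8 * α * a ^ 3 + 8 * a ^ 2 + 2 * a * (1 / α + β * μ) + μ * (β / α - 1) = 0 := by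
    field_simp
    linear_combination (-α) * hre - (3 * α * a + 1) * hK
  refine ⟨hcubic, hb2, fun x hx => ?_⟩
  have hbpos : 0 < b ^ 2 := by positivity
  by_contra hne
  have hxa : x - a ≠ 0 := sub_ne_zero.mpr hne
  -- quadratic factor is positive
  have hQ : α * (8 * α * x ^ 2 + 8 * α * x * a + 8 * α * a ^ 2 + 8 * x + 8 * a
      + 2 / α + 2 * β * μ) = 2 * (2 * α * x + α * a + 1) ^ 2 + 2 * α ^ 2 * b ^ 2 := by
    field_simp
    linear_combination (-2 * α) * hK
  have hQpos : 0 < 8 * α * x ^ 2 + 8 * α * x * a + 8 * α * a ^ 2 + 8 * x + 8 * a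
      + 2 / α + 2 * β * μ := by
    have h2 : 0 < 2 * (2 * α * x + α * a + 1) ^ 2 + 2 * α ^ 2 * b ^ 2 := by positivity
    nlinarith [hQ]
  have hfac : (x - a) * (8 * α * x ^ 2 + 8 * α * x * a + 8 * α * a ^ 2 + 8 * x + 8 * a
      + 2 / α + 2 * β * μ) = 0 := by
    linear_combination hx - hcubic
  rcases mul_eq_zero.mp hfac with h | h
  · exact hxa h
  · linarith
end

section
/- Let α, β be real numbers with 0 < α < β, and let 0 < μ < μ′. If λ is a nonreal complex root of p_μ(λ) = αλ³ + λ² + βμλ + μ and λ′ is a nonreal complex root of p_{μ′}(λ) = αλ³ + λ² + βμ′λ + μ′, then Re(λ) > Re(λ′). -/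
private lemma key2 (α β e m : ℝ) (hα : 0 < α) (he0 : 0 < e) (he1 : e < 1) (hm0 : 0 < m)
    (hc : 4*m ≤ (1-e)^2) (hS : β*(e*(1-e)+2*m) ≤ α*(5-3*e)) :
    0 ≤ α*(m+e*(1-e)) - β*e*m := by
  have hpos : 0 < e*(1-e)+2*m := by nlinarith
  nlinarith [mul_nonneg (mul_nonneg he0.le hm0.le) (sub_nonneg.mpr hS),
    mul_nonneg hα.le (sq_nonneg (2*m - e*(1-e))),
    mul_nonneg (mul_nonneg hα.le (sq_nonneg e)) (by linarith : (0:ℝ) ≤ (1-e)^2 - 4*m),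
    hpos]

private lemma key_uv (α β u v : ℝ) (hα : 0 < α) (hαβ : α < β)
    (hu0 : 0 < u) (hu1 : u < 1) (hv0 : 0 < v) (hv1 : v < 1)
    (hgu : α < β*(1-u)) (hgv : α < β*(1-v))
    (hqu : 0 < β*u^2 - (β+3*α)*u + 4*α) (hqv : 0 < β*v^2 - (β+3*α)*v + 4*α) :
    0 ≤ β*(1-u)*(1-v)*(1-u-v) + α*(u*v - (1-u-v)^2) := by
  rcases le_or_gt (u+v) 1 with h | h
  · nlinarith [mul_nonneg (by linarith : (0:ℝ) ≤ 1-u-v)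
      (by nlinarith : (0:ℝ) ≤ (1-u)*(β*(1-v)-α) + α*v), mul_pos hu0 hv0]
  · have h4m : 4*((1-u)*(1-v)) ≤ (1 - (u+v-1))^2 := by nlinarith [sq_nonneg (u-v)]
    have hS : β*((u+v-1)*(1-(u+v-1)) + 2*((1-u)*(1-v))) ≤ α*(5-3*(u+v-1)) := by
      nlinarith [hqu, hqv]
    have hk := key2 α β (u+v-1) ((1-u)*(1-v)) hα (by linarith) (by linarith)
      (by nlinarith) h4m hS
    nlinarith [hk]

private lemma root_facts (α β μ : ℝ) (hα : 0 < α) (hαβ : α < β) (hμ : 0 < μ)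
    (z : ℂ) (him : z.im ≠ 0)
    (hroot : (α : ℂ) * z ^ 3 + z ^ 2 + (β : ℂ) * (μ : ℂ) * z + (μ : ℂ) = 0) :
    0 < 2*α*β*z.re + β - α ∧ z.re < 0 ∧ 0 < 2*α*z.re + 1 ∧
    0 < 2*α*β*z.re^2 + (β+3*α)*z.re + 2 ∧
    μ*(2*α*β*z.re + β - α) = -(2*z.re*(2*α*z.re+1)^2) := by
  set a := z.re with ha'
  set b := z.im with hb'
  have hβ : 0 < β := hα.trans hαβ
  have h1 := congrArg Complex.re hroot
  have h2 := congrArg Complex.im hroot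
  simp [pow_succ, Complex.add_re, Complex.add_im, Complex.mul_re, Complex.mul_im] at h1 h2
  have hre : α*(a^3 - 3*a*b^2) + (a^2 - b^2) + β*μ*a + μ = 0 := by linear_combination h1
  have him2 : b*(3*α*a^2 - α*b^2 + 2*a + β*μ) = 0 := by linear_combination h2
  have h3 : 3*α*a^2 - α*b^2 + 2*a + β*μ = 0 := by
    rcases mul_eq_zero.mp him2 with h | h
    · exact absurd h him
    · exact h
  have hb2 : 0 < b^2 := by rcases him.lt_or_gt with h|h <;> nlinarith
  have hb2pos : 0 < 3*α*a^2 + 2*a + β*μ := by nlinarith [mul_pos hα hb2]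
  have hE : μ*(2*α*β*a + β - α) = -(2*a*(2*α*a+1)^2) := by
    linear_combination (-α)*hre + (3*α*a+1)*h3
  have hg : 0 < 2*α*β*a + β - α := by
    by_contra h
    push_neg at h
    have hab : 0 < α*β := mul_pos hα hβ
    have haneg : a < 0 := by nlinarith
    have hμg : μ*(2*α*β*a + β - α) ≤ 0 := mul_nonpos_of_nonneg_of_nonpos hμ.le h
    have h0 : -(2*a*(2*α*a+1)^2) ≤ 0 := hE ▸ hμg
    have hsq : (2*α*a+1)^2 ≤ 0 := by nlinarith [h0, haneg]
    have h2a1 : 2*α*a+1 = 0 := by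
      have h4 : (2*α*a+1)^2 = 0 := le_antisymm hsq (sq_nonneg _)
      exact (pow_eq_zero_iff two_ne_zero).mp h4
    have hg0 : μ*(2*α*β*a + β - α) = 0 := by
      linear_combination hE - (2*a*(2*α*a+1))*h2a1
    have hgz : 2*α*β*a + β - α = 0 := (mul_eq_zero.mp hg0).resolve_left hμ.ne'
    have : α = 0 := by linear_combination β*h2a1 - hgz
    exact absurd this hα.ne'
  have h1a : 0 < 2*α*a + 1 := by nlinarith
  have han : a < 0 := by nlinarith [mul_pos hμ hg, sq_nonneg (2*α*a+1), mul_pos h1a h1a]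
  have hid : (3*α*a^2+2*a+β*μ)*(2*α*β*a+β-α) = -(α*a*(2*α*β*a^2+(β+3*α)*a+2)) := by
    linear_combination β*hE
  have hq : 0 < 2*α*β*a^2 + (β+3*α)*a + 2 := by
    nlinarith [mul_pos hb2pos hg, mul_pos hα (neg_pos.mpr han)]
  exact ⟨hg, han, h1a, hq, hE⟩

set_option maxHeartbeats 1000000 in
/-- For `0 < α < β` and `0 < μ < μ′`, if `λ` is a nonreal root of
`αλ³ + λ² + βμλ + μ` and `λ′` is a nonreal root of `αλ³ + λ² + βμ′λ + μ′`, then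
`Re(λ) > Re(λ′)`. -/
theorem stmt_8 (α β : ℝ) (hα : 0 < α) (hαβ : α < β)
    (μ μ' : ℝ) (hμ : 0 < μ) (hμμ' : μ < μ')
    (z z' : ℂ) (him : z.im ≠ 0) (him' : z'.im ≠ 0)
    (hroot : (α : ℂ) * z ^ 3 + z ^ 2 + (β : ℂ) * (μ : ℂ) * z + (μ : ℂ) = 0)
    (hroot' : (α : ℂ) * z' ^ 3 + z' ^ 2 + (β : ℂ) * (μ' : ℂ) * z' + (μ' : ℂ) = 0) :
    z'.re < z.re := by
  obtain ⟨hg, han, h1a, hq, hE⟩ := root_facts α β μ hα hαβ hμ z him hroot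
  obtain ⟨hg', han', h1a', hq', hE'⟩ :=
    root_facts α β μ' hα hαβ (hμ.trans hμμ') z' him' hroot'
  set a := z.re
  set a' := z'.re
  by_contra hcon
  push_neg at hcon  -- hcon : a ≤ a'
  have hβ : 0 < β := hα.trans hαβ
  -- apply key_uv with u = -2αa, v = -2αa'
  have hK := key_uv α β (-(2*α*a)) (-(2*α*a')) hα hαβ
    (by nlinarith [mul_pos hα (neg_pos.mpr han)]) (by linarith)
    (by nlinarith [mul_pos hα (neg_pos.mpr han')]) (by linarith)
    (by nlinarith) (by nlinarith)
    (by nlinarith [mul_pos hα hq]) (by nlinarith [mul_pos hα hq'])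
  have hD : 0 ≤ (a' - a) * (β*(1-(-(2*α*a)))*(1-(-(2*α*a')))*(1-(-(2*α*a))-(-(2*α*a'))) +
      α*((-(2*α*a))*(-(2*α*a')) - (1-(-(2*α*a))-(-(2*α*a')))^2)) :=
    mul_nonneg (by linarith) hK
  have hRg : μ*(2*α*β*a + β - α)*(2*α*β*a' + β - α)
      = -(2*a*(2*α*a+1)^2)*(2*α*β*a' + β - α) := by rw [hE]
  have hR'g : μ'*(2*α*β*a' + β - α)*(2*α*β*a + β - α)
      = -(2*a'*(2*α*a'+1)^2)*(2*α*β*a + β - α) := by rw [hE']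
  nlinarith [hD, hRg, hR'g, mul_pos (sub_pos.mpr hμμ') (mul_pos hg hg')]
end

section
/- Let α, β be real numbers with 0 < α/β < 1/9 and let m₁ < m₂ be as defined. Let m₁ < μ < μ′ < m₂, so that each of p_μ and p_{μ′} has three distinct real roots. If λ₂ denotes the middle (second smallest) real root of p_μ and λ₂′ denotes the middle real root of p_{μ′}, then λ₂ > λ₂′; that is, the middle real root is strictly decreasing as a function of μ on (m₁, m₂). -/
/-- Any real root of `αx³+x²+βμx+μ` with `μ>0`, `0<α<β` satisfies `βx+1<0`. -/
lemma root_loc (α β μ x : ℝ) (hα : 0 < α) (hβ : 0 < β) (hαβ : α < β) (hμ : 0 < μ)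
    (hroot : α * x ^ 3 + x ^ 2 + β * μ * x + μ = 0) : β * x + 1 < 0 := by
  by_contra hc
  push_neg at hc
  -- hc : 0 ≤ β*x+1
  have key : x ^ 2 * (α * x + 1) = -(μ * (β * x + 1)) := by linear_combination hroot
  have h1 : x ^ 2 * (α * x + 1) ≤ 0 := by nlinarith [mul_nonneg hμ.le hc]
  have h2 : 0 < β * (α * x + 1) := by nlinarith [mul_nonneg hα.le hc]
  have h3 : 0 < α * x + 1 := by
    by_contra h3
    push_neg at h3
    nlinarith
  have hx2 : x ^ 2 ≤ 0 := by
    by_contra hx2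
    push_neg at hx2
    nlinarith [mul_pos hx2 h3]
  have hx0 : x = 0 := by
    have := le_antisymm hx2 (sq_nonneg x)
    exact sq_eq_zero_iff.mp this
  rw [hx0] at hroot
  nlinarith

/-- Factorization of the cubic given three distinct roots. -/
lemma cubic_factor (α β μ a b c : ℝ) (hab : a < b) (hbc : b < c)
    (pa : α * a ^ 3 + a ^ 2 + β * μ * a + μ = 0)
    (pb : α * b ^ 3 + b ^ 2 + β * μ * b + μ = 0)
    (pc : α * c ^ 3 + c ^ 2 + β * μ * c + μ = 0) :
    α * (a + b + c) = -1 ∧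
    ∀ x : ℝ, α * x ^ 3 + x ^ 2 + β * μ * x + μ = α * (x - a) * (x - b) * (x - c) := by
  have hab' : a - b ≠ 0 := by intro e; nlinarith [sub_ne_zero.mpr hab.ne]
  have hbc' : b - c ≠ 0 := sub_ne_zero.mpr hbc.ne
  have hac' : a - c ≠ 0 := sub_ne_zero.mpr (hab.trans hbc).ne
  have E1 : (a - b) * (α * (a^2 + a*b + b^2) + (a + b) + β * μ) = 0 := by
    linear_combination pa - pb
  have E2 : (b - c) * (α * (b^2 + b*c + c^2) + (b + c) + β * μ) = 0 := by
    linear_combination pb - pc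
  have E1' : α * (a^2 + a*b + b^2) + (a + b) + β * μ = 0 :=
    (mul_eq_zero.mp E1).resolve_left hab'
  have E2' : α * (b^2 + b*c + c^2) + (b + c) + β * μ = 0 :=
    (mul_eq_zero.mp E2).resolve_left hbc'
  have S0 : (a - c) * (α * (a + b + c) + 1) = 0 := by linear_combination E1' - E2'
  have S1 : α * (a + b + c) + 1 = 0 := (mul_eq_zero.mp S0).resolve_left hac'
  have S : α * (a + b + c) = -1 := by linarith
  have pair : α * (a*b + a*c + b*c) = β * μ := by linear_combination (a + b) * S1 - E1'
  have prod : α * (a * b * c) = -μ := by linear_combination pa + a * pair + (-a^2) * S1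
  refine ⟨S, fun x => ?_⟩
  linear_combination (x^2) * S1 + (-x) * pair + prod


/-- For `0 < α/β < 1/9` (with `α, β > 0`), let `0 < m₁ < m₂` be the
positive roots of the quadratic `(4β³/α)μ² + C₁μ + 4/α²` with
`C₁ = 27 − 18(β/α) − (β/α)²`. For `m₁ < μ < μ′ < m₂`, if `λ₂` is the middle real root
of `αλ³ + λ² + βμλ + μ` (i.e. a real root having both a strictly smaller and a
strictly larger real root) and `λ₂′` is the middle real root of
`αλ³ + λ² + βμ′λ + μ′`, then `λ₂ > λ₂′`. -/
theorem stmt_9 (α β : ℝ) (hα : 0 < α) (hβ : 0 < β) (h : α / β < 1 / 9)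
    (m₁ m₂ : ℝ) (hm₁pos : 0 < m₁) (hm₁₂ : m₁ < m₂)
    (hq₁ : (4 * β ^ 3 / α) * m₁ ^ 2 + (27 - 18 * (β / α) - (β / α) ^ 2) * m₁ + 4 / α ^ 2 = 0)
    (hq₂ : (4 * β ^ 3 / α) * m₂ ^ 2 + (27 - 18 * (β / α) - (β / α) ^ 2) * m₂ + 4 / α ^ 2 = 0)
    (μ μ' : ℝ) (h₁ : m₁ < μ) (h₂ : μ < μ') (h₃ : μ' < m₂)
    (l₂ l₂' : ℝ)
    (hl₂ : α * l₂ ^ 3 + l₂ ^ 2 + β * μ * l₂ + μ = 0)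
    (hmid : ∃ a b : ℝ, a < l₂ ∧ l₂ < b ∧
      α * a ^ 3 + a ^ 2 + β * μ * a + μ = 0 ∧
      α * b ^ 3 + b ^ 2 + β * μ * b + μ = 0)
    (hl₂' : α * l₂' ^ 3 + l₂' ^ 2 + β * μ' * l₂' + μ' = 0)
    (hmid' : ∃ a b : ℝ, a < l₂' ∧ l₂' < b ∧
      α * a ^ 3 + a ^ 2 + β * μ' * a + μ' = 0 ∧
      α * b ^ 3 + b ^ 2 + β * μ' * b + μ' = 0) :
    l₂' < l₂ := by
  have hαβ : α < β := by
    rw [div_lt_div_iff₀ hβ (by norm_num)] at h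
    linarith
  have hμpos : 0 < μ := hm₁pos.trans h₁
  have hμ'pos : 0 < μ' := hμpos.trans h₂
  obtain ⟨a, b, hal, hlb, pa, pb⟩ := hmid
  obtain ⟨a', b', hal', hlb', pa', pb'⟩ := hmid'
  obtain ⟨Sμ, Fμ⟩ := cubic_factor α β μ a l₂ b hal hlb pa hl₂ pb
  obtain ⟨Sμ', Fμ'⟩ := cubic_factor α β μ' a' l₂' b' hal' hlb' pa' hl₂' pb'
  have loc₂' : β * l₂' + 1 < 0 := root_loc α β μ' l₂' hα hβ hαβ hμ'pos hl₂'
  have loca' : β * a' + 1 < 0 := root_loc α β μ' a' hα hβ hαβ hμ'pos pa'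
  have loc₂ : β * l₂ + 1 < 0 := root_loc α β μ l₂ hα hβ hαβ hμpos hl₂
  -- p_μ(l₂') = (μ' - μ) * (-(β l₂' + 1)) > 0
  have vpos : 0 < α * l₂' ^ 3 + l₂' ^ 2 + β * μ * l₂' + μ := by
    have key : α * l₂' ^ 3 + l₂' ^ 2 + β * μ * l₂' + μ
        = (μ' - μ) * (-(β * l₂' + 1)) := by linear_combination hl₂'
    rw [key]
    exact mul_pos (by linarith) (by linarith)
  -- p_μ(a') = (μ' - μ) * (-(β a' + 1)) > 0
  have vpos2 : 0 < α * a' ^ 3 + a' ^ 2 + β * μ * a' + μ := by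
    have key : α * a' ^ 3 + a' ^ 2 + β * μ * a' + μ
        = (μ' - μ) * (-(β * a' + 1)) := by linear_combination pa'
    rw [key]
    exact mul_pos (by linarith) (by linarith)
  -- p_{μ'}(l₂) = (μ' - μ) * (β l₂ + 1) < 0
  have vneg : α * l₂ ^ 3 + l₂ ^ 2 + β * μ' * l₂ + μ' < 0 := by
    have key : α * l₂ ^ 3 + l₂ ^ 2 + β * μ' * l₂ + μ'
        = (μ' - μ) * (β * l₂ + 1) := by linear_combination hl₂
    rw [key]
    exact mul_neg_of_pos_of_neg (by linarith) loc₂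
  by_contra hcon
  push_neg at hcon
  -- l₂ ≤ l₂'; first l₂ ≠ l₂'
  have hlt : l₂ < l₂' := by
    rcases lt_or_eq_of_le hcon with h' | h'
    · exact h'
    · rw [← h'] at vpos; linarith
  rw [Fμ l₂'] at vpos
  rw [Fμ' l₂] at vneg
  -- from vpos : 0 < α (l₂'-a)(l₂'-l₂)(l₂'-b), first two factors positive ⇒ b < l₂'
  have hb : b < l₂' := by
    by_contra hb
    push_neg at hb
    have hf : 0 < α * (l₂' - a) * (l₂' - l₂) :=
      mul_pos (mul_pos hα (by linarith)) (by linarith)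
    have hprod : α * (l₂' - a) * (l₂' - l₂) * (l₂' - b) ≤ 0 :=
      mul_nonpos_of_nonneg_of_nonpos hf.le (by linarith)
    linarith
  -- from vneg : α (l₂-a')(l₂-l₂')(l₂-b') < 0 with l₂ < l₂' < b' ⇒ l₂ < a'
  have ha' : l₂ < a' := by
    by_contra ha'
    push_neg at ha'
    have h5 : α * (l₂ - a') * (l₂ - l₂') ≤ 0 :=
      mul_nonpos_of_nonneg_of_nonpos (mul_nonneg hα.le (by linarith)) (by linarith)
    have hprod : 0 ≤ α * (l₂ - a') * (l₂ - l₂') * (l₂ - b') :=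
      mul_nonneg_of_nonpos_of_nonpos h5 (by linarith)
    linarith
  -- from vpos2 with factorization : a' > b
  rw [Fμ a'] at vpos2
  have hba' : b < a' := by
    by_contra hba'
    push_neg at hba'
    have hf : 0 < α * (a' - a) * (a' - l₂) :=
      mul_pos (mul_pos hα (by linarith)) (by linarith)
    have hprod : α * (a' - a) * (a' - l₂) * (a' - b) ≤ 0 :=
      mul_nonpos_of_nonneg_of_nonpos hf.le (by linarith)
    linarith
  -- sums of roots are both -1/α, but termwise strict inequality: contradiction
  have : α * (a + l₂ + b) < α * (a' + l₂' + b') := by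
    apply mul_lt_mul_of_pos_left _ hα
    have : b < b' := by linarith
    linarith
  linarith [Sμ, Sμ']
end

section
/- Let α, β be real numbers with 0 < α < β. Then for every ε > 0 there exists M > 0 such that for all μ > M, every real root λ of the cubic p_μ(λ) = αλ³ + λ² + βμλ + μ satisfies |λ + 1/β| < ε. (That is, the real roots tend to −1/β as μ → ∞.) -/
/-- For `0 < α < β`: for every `ε > 0` there exists `M > 0` such that
for all `μ > M`, every real root `λ` of `αλ³ + λ² + βμλ + μ` satisfies
`|λ + 1/β| < ε`. -/
theorem stmt_10 (α β : ℝ) (hα : 0 < α) (hαβ : α < β) :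
    ∀ ε > 0, ∃ M > 0, ∀ μ > M, ∀ l : ℝ,
      α * l ^ 3 + l ^ 2 + β * μ * l + μ = 0 → |l + 1 / β| < ε := by
  intro ε hε
  have hβ : 0 < β := hα.trans hαβ
  refine ⟨1 / (α ^ 2 * β * ε) + 1, by positivity, ?_⟩
  intro μ hμ l hroot
  have hμ0 : 0 < μ := lt_trans (by positivity) hμ
  -- any root is negative
  have hl0 : l < 0 := by
    by_contra h
    push_neg at h
    nlinarith [mul_nonneg (mul_nonneg hα.le (mul_nonneg h h)) h,
      mul_nonneg (mul_nonneg hβ.le hμ0.le) h, sq_nonneg l]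
  -- any root satisfies α*l + 1 > 0
  have hl1 : 0 < α * l + 1 := by
    by_contra h
    push_neg at h
    have hβl : β * l < α * l := by nlinarith
    nlinarith [mul_nonneg (sq_nonneg l) (neg_nonneg.mpr h), mul_pos hμ0 hμ0,
      mul_lt_mul_of_pos_left hβl hμ0]
  have hsq : α ^ 2 * l ^ 2 < 1 := by
    nlinarith [mul_pos hl1 (show (0:ℝ) < 1 - α * l by nlinarith)]
  have hcμ : 1 < α ^ 2 * β * ε * μ := by
    have hc : 0 < α ^ 2 * β * ε := by positivity
    have : 1 / (α ^ 2 * β * ε) < μ := by linarith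
    calc 1 = α ^ 2 * β * ε * (1 / (α ^ 2 * β * ε)) := by field_simp
    _ < α ^ 2 * β * ε * μ := by exact mul_lt_mul_of_pos_left this hc
  have heq : l + 1 / β = (β * l + 1) / β := by field_simp
  rw [heq, abs_div, abs_of_pos hβ, div_lt_iff₀ hβ, abs_lt]
  constructor
  · -- lower bound
    by_contra h
    push_neg at h
    have h2 : μ * (β * l + 1) ≤ μ * (-(ε * β)) := mul_le_mul_of_nonneg_left h hμ0.le
    have h3 : l ^ 2 * (α * l) ≤ 0 := by nlinarith [sq_nonneg l]
    have h5 : μ * ε * β ≤ l ^ 2 := by nlinarith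
    have h6 : α ^ 2 * (μ * ε * β) ≤ α ^ 2 * l ^ 2 :=
      mul_le_mul_of_nonneg_left h5 (by positivity)
    nlinarith
  · -- upper bound: β*l+1 ≤ 0 < ε*β
    nlinarith [mul_nonneg (sq_nonneg l) hl1.le, mul_pos hε hβ, hμ0]
end

section
/- Let α, β be real numbers with 0 < α < β. Then for every ε > 0 there exists M > 0 such that for all μ > M, every nonreal complex root λ of the cubic p_μ(λ) = αλ³ + λ² + βμλ + μ satisfies |Re(λ) + (1/2)(1/α − 1/β)| < ε. (That is, the real parts of the nonreal roots tend to −(1/2)(1/α − 1/β) as μ → ∞.) -/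
/-- Auxiliary: positivity of the quadratic factor when `3·a·m > 1`. -/
lemma stmt_11_q_pos (a t u m : ℝ) (ha : 0 < a) (hm : 1 < 3 * a * m) :
    0 < a * (t ^ 2 + t * u + u ^ 2) + t + u + m := by
  nlinarith [sq_nonneg (2 * a * t + 1 + a * u), sq_nonneg (3 * a * u + 1)]

lemma stmt_11_cube_neg (a c : ℝ) (hc : 0 < c) (h1 : a * c < 1) :
    a * c ^ 3 - c ^ 2 < 0 := by
  nlinarith [mul_pos (mul_pos hc hc) (sub_pos.mpr h1)]

lemma stmt_11_sq_aux (c δ : ℝ) (hc : 0 < c) (hδ : 0 < δ) (h1 : δ ≤ 1) :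
    (-c - δ) ^ 2 ≤ (c + 1) ^ 2 := by
  nlinarith

set_option maxHeartbeats 1000000 in
/-- For `0 < α < β`: for every `ε > 0` there exists `M > 0` such that
for all `μ > M`, every nonreal root `λ` of `αλ³ + λ² + βμλ + μ` satisfies
`|Re(λ) + (1/2)(1/α − 1/β)| < ε`. -/
theorem stmt_11 (α β : ℝ) (hα : 0 < α) (hαβ : α < β) :
    ∀ ε > 0, ∃ M > 0, ∀ μ : ℝ, μ > M → ∀ z : ℂ, z.im ≠ 0 →
      (α : ℂ) * z ^ 3 + z ^ 2 + (β : ℂ) * (μ : ℂ) * z + (μ : ℂ) = 0 →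
      |z.re + (1 / 2) * (1 / α - 1 / β)| < ε := by
  have hβ : 0 < β := hα.trans hαβ
  intro ε hε
  set δ : ℝ := min ε 1 with hδdef
  have hδ : 0 < δ := lt_min hε one_pos
  have hδε : δ ≤ ε := min_le_left _ _
  have hδ1 : δ ≤ 1 := min_le_right _ _
  clear_value δ
  refine ⟨1/(3*α*β) + (1/β+1)^2/(β*δ) + 1, by positivity, ?_⟩
  intro μ hμ z him hroot
  set x : ℝ := z.re with hxdef
  set y : ℝ := z.im with hydef
  have hμpos : 0 < μ := by
    have : (0:ℝ) < 1/(3*α*β) + (1/β+1)^2/(β*δ) + 1 := by positivity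
    linarith
  have hμ1 : 1 < 3*α*β*μ := by
    have h1 : 1/(3*α*β) < μ := by
      have : (0:ℝ) < (1/β+1)^2/(β*δ) := by positivity
      linarith
    have := (div_lt_iff₀ (by positivity : (0:ℝ) < 3*α*β)).mp h1
    linarith
  have hμ2 : (1/β+1)^2 < μ*(β*δ) := by
    have h1 : (1/β+1)^2/(β*δ) < μ := by
      have : (0:ℝ) < 1/(3*α*β) := by positivity
      linarith
    exact (div_lt_iff₀ (by positivity : (0:ℝ) < β*δ)).mp h1
  -- real and imaginary parts of the root equation
  have e1 : α*(x^3 - 3*x*y^2) + (x^2 - y^2) + β*μ*x + μ = 0 := by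
    have := congrArg Complex.re hroot
    simp [Complex.add_re, Complex.mul_re, Complex.mul_im, pow_succ] at this
    linear_combination this
  have e2' : α*(3*x^2*y - y^3) + 2*x*y + β*μ*y = 0 := by
    have := congrArg Complex.im hroot
    simp [Complex.add_im, Complex.mul_re, Complex.mul_im, pow_succ] at this
    linear_combination this
  have e2 : 3*α*x^2 - α*y^2 + 2*x + β*μ = 0 := by
    have h0 : y * (3*α*x^2 - α*y^2 + 2*x + β*μ) = 0 := by linear_combination e2'
    rcases mul_eq_zero.mp h0 with h | h
    · exact absurd h him
    · exact h
  clear_value x y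
  -- the real root t
  set t : ℝ := -(1/α) - 2*x with htdef
  clear_value t
  have ht : α * t = -1 - 2*α*x := by
    rw [htdef]; field_simp
  have h3 : (α*t)^3 + (α*t)^2 + β*μ*α*(α*t) + α^2*μ = 0 := by
    rw [ht]
    linear_combination α^2 * e1 - α*(3*α*x+1) * e2
  have hr : α*t^3 + t^2 + β*μ*t + μ = 0 := by
    apply mul_left_cancel₀ (pow_ne_zero 2 hα.ne' : α^2 ≠ 0)
    rw [mul_zero]
    linear_combination h3
  -- c = 1/β
  set c : ℝ := 1/β with hcdef
  clear_value c
  have hc : β * c = 1 := by rw [hcdef]; field_simp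
  have hcpos : 0 < c := by rw [hcdef]; positivity
  have hαc : α * c < 1 := by
    have := mul_lt_mul_of_pos_right hαβ hcpos
    rw [hc] at this
    linarith
  have hμ1' : 1 < 3*α*(β*μ) := by linear_combination hμ1
  -- Upper bound: t < -c
  set Q : ℝ := α*(t^2 - t*c + c^2) + t - c + β*μ with hQdef
  clear_value Q
  have hQ : 0 < Q := by
    have h := stmt_11_q_pos α t (-c) (β*μ) hα hμ1'
    have heq : α*((-c)^2 + t*(-c) + t^2) + t + (-c) + β*μ = Q := by
      rw [hQdef]; ring
    calc (0:ℝ) < α*(t^2 + t*(-c) + (-c)^2) + t + (-c) + β*μ := h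
    _ = Q := by rw [hQdef]; ring
  have key1 : (t + c) * Q = α*c^3 - c^2 := by
    rw [hQdef]; linear_combination hr + μ*hc
  have hneg : α*c^3 - c^2 < 0 := stmt_11_cube_neg α c hcpos hαc
  have h1 : t + c < 0 := by
    by_contra h
    push_neg at h
    linarith [mul_nonneg h hQ.le, key1, hneg]
  -- Lower bound: t > -c - δ
  set b : ℝ := -c - δ with hbdef
  clear_value b
  have hbneg : b < 0 := by rw [hbdef]; linarith
  set Q2 : ℝ := α*(t^2 + t*b + b^2) + t + b + β*μ with hQ2def
  clear_value Q2
  have hQ2 : 0 < Q2 := by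
    have h := stmt_11_q_pos α t b (β*μ) hα hμ1'
    calc (0:ℝ) < α*(t^2 + t*b + b^2) + t + b + β*μ := h
    _ = Q2 := by rw [hQ2def]
  have key2 : (t - b) * Q2 = μ*β*δ - α*b^3 - b^2 := by
    rw [hQ2def, hbdef]
    linear_combination hr + μ*hc
  have hb2 : b^2 ≤ (c+1)^2 := by
    rw [hbdef]
    exact stmt_11_sq_aux c δ hcpos hδ hδ1
  have hb3 : b^3 < 0 := Odd.pow_neg (by decide) hbneg
  have hab3 : α*b^3 < 0 := mul_neg_of_pos_of_neg hα hb3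
  have hμ2' : (c+1)^2 < μ*β*δ := by
    have hass : μ*(β*δ) = μ*β*δ := by ring
    linarith [hμ2, hass]
  have hrhs : 0 < μ*β*δ - α*b^3 - b^2 := by
    linarith [hμ2', hb2, hab3]
  have h2 : 0 < t - b := by
    by_contra h
    push_neg at h
    linarith [mul_nonpos_of_nonpos_of_nonneg h hQ2.le, key2, hrhs]
  -- conclude
  rw [abs_lt]
  constructor
  · linarith [h1, htdef, hcdef, hδε, hε]
  · linarith [h2, htdef, hcdef, hbdef, hδε]
end

section
/- Let α, β be real numbers with 0 < α < β. Then for every ε > 0 there exists M > 0 such that for all μ > M, every nonreal complex root λ of p_μ(λ) = αλ³ + λ² + βμλ + μ with Im(λ) > 0 satisfies |Im(λ) − √(β/α)·√μ| < ε·√μ. (That is, Im(λ) = √(β/α)·√μ + o(√μ) as μ → ∞.) -/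
/-!
Write a root as `z = x + iy` with `y > 0`. The imaginary part of the equation gives
`α y² = 3αx² + 2x + βμ`, and substituting this into the real part leaves
`μ((β - α) + 2αβx) = -2x(2αx + 1)²`. Since `β > α`, this forces `x` into the fixed interval
`[-(β - α)/(2αβ), 0]`, so `y² = (β/α)μ + O(1)` uniformly in `μ`,
whence `y = √(β/α)·√μ + O(1/√μ)`.
-/

section CubicRoot

variable {α β μ : ℝ} {z : ℂ}

lemma re_im_eq_zero_of_cubic_root
    (hz : (α : ℂ) * z ^ 3 + z ^ 2 + (β : ℂ) * (μ : ℂ) * z + (μ : ℂ) = 0) :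
    α * (z.re ^ 3 - 3 * z.re * z.im ^ 2) + z.re ^ 2 - z.im ^ 2 + β * μ * z.re + μ = 0 ∧
      α * (3 * z.re ^ 2 * z.im - z.im ^ 3) + 2 * z.re * z.im + β * μ * z.im = 0 := by
  have hre := congrArg Complex.re hz
  have him := congrArg Complex.im hz
  simp only [Complex.add_re, Complex.add_im, Complex.mul_re, Complex.mul_im, pow_succ, pow_zero,
    one_mul, Complex.ofReal_re, Complex.ofReal_im, Complex.zero_re, Complex.zero_im] at hre him
  exact ⟨by linear_combination hre, by linear_combination him⟩

lemma im_sq_of_cubic_root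
    (hz : (α : ℂ) * z ^ 3 + z ^ 2 + (β : ℂ) * (μ : ℂ) * z + (μ : ℂ) = 0)
    (hy : z.im ≠ 0) :
    α * z.im ^ 2 = 3 * α * z.re ^ 2 + 2 * z.re + β * μ := by
  have him := (re_im_eq_zero_of_cubic_root hz).2
  have h : (α * (3 * z.re ^ 2 - z.im ^ 2) + 2 * z.re + β * μ) * z.im = 0 := by
    linear_combination him
  linear_combination -(mul_eq_zero.mp h).resolve_right hy

lemma re_eq_of_cubic_root
    (hz : (α : ℂ) * z ^ 3 + z ^ 2 + (β : ℂ) * (μ : ℂ) * z + (μ : ℂ) = 0)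
    (hy : z.im ≠ 0) :
    μ * ((β - α) + 2 * α * β * z.re) = -2 * z.re * (2 * α * z.re + 1) ^ 2 := by
  linear_combination -α * (re_im_eq_zero_of_cubic_root hz).1 +
    (-(3 * α * z.re) - 1) * im_sq_of_cubic_root hz hy

end CubicRoot

lemma mem_Icc_of_mul_eq_neg_mul_sq {α β μ x : ℝ} (hα : 0 < α) (hαβ : α < β)
    (hμ : 0 < μ) (h : μ * ((β - α) + 2 * α * β * x) = -2 * x * (2 * α * x + 1) ^ 2) :
    x ∈ Set.Icc (-((β - α) / (2 * α * β))) 0 := by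
  have hβ : 0 < β := hα.trans hαβ
  have hx : x ≤ 0 := by
    by_contra! hx
    nlinarith [mul_pos hμ (sub_pos.mpr hαβ), mul_pos (mul_pos (mul_pos hα hβ) hμ) hx,
      mul_nonneg hx.le (sq_nonneg (2 * α * x + 1))]
  have hlin : 0 ≤ (β - α) + 2 * α * β * x := by
    have : 0 ≤ μ * ((β - α) + 2 * α * β * x) := by
      rw [h]; exact mul_nonneg (by linarith) (sq_nonneg _)
    exact nonneg_of_mul_nonneg_right (by linarith) hμ
  refine ⟨?_, hx⟩
  rw [neg_le, le_div_iff₀ (by positivity)]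
  linarith

lemma abs_sub_le_abs_sq_sub_div {y u : ℝ} (hy : 0 ≤ y) (hu : 0 < u) :
    |y - u| ≤ |y ^ 2 - u ^ 2| / u := by
  rw [le_div_iff₀ hu, show y ^ 2 - u ^ 2 = (y - u) * (y + u) by ring, abs_mul,
    abs_of_pos (by linarith : 0 < y + u)]
  exact mul_le_mul_of_nonneg_left (by linarith) (abs_nonneg _)

lemma abs_im_sq_sub_le_of_cubic_root {α β μ : ℝ} {z : ℂ} (hα : 0 < α) (hαβ : α < β)
    (hμ : 0 < μ) (hz : (α : ℂ) * z ^ 3 + z ^ 2 + (β : ℂ) * (μ : ℂ) * z + (μ : ℂ) = 0)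
    (hy : z.im ≠ 0) :
    |z.im ^ 2 - β / α * μ| ≤
      3 * ((β - α) / (2 * α * β)) ^ 2 + 2 * ((β - α) / (2 * α * β)) / α := by
  set B := (β - α) / (2 * α * β)
  obtain ⟨hBx, hx0⟩ := mem_Icc_of_mul_eq_neg_mul_sq hα hαβ hμ (re_eq_of_cubic_root hz hy)
  have hsq : z.im ^ 2 - β / α * μ = (3 * α * z.re ^ 2 + 2 * z.re) / α := by
    field_simp
    linear_combination im_sq_of_cubic_root hz hy
  rw [hsq, abs_div, abs_of_pos hα, div_le_iff₀ hα, add_mul, div_mul_cancel₀ _ hα.ne', abs_le]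
  have hBre : 0 ≤ (B - z.re) * (B + z.re) := mul_nonneg (by linarith) (by linarith)
  constructor <;> nlinarith [sq_nonneg z.re]

/-- For `0 < α < β`: for every `ε > 0` there exists `M > 0` such that
for all `μ > M`, every nonreal root `λ` of `αλ³ + λ² + βμλ + μ` with `Im(λ) > 0`
satisfies `|Im(λ) − √(β/α)·√μ| < ε·√μ`. -/
theorem stmt_12 (α β : ℝ) (hα : 0 < α) (hαβ : α < β) :
    ∀ ε > 0, ∃ M > 0, ∀ μ : ℝ, μ > M → ∀ z : ℂ, 0 < z.im →
      (α : ℂ) * z ^ 3 + z ^ 2 + (β : ℂ) * (μ : ℂ) * z + (μ : ℂ) = 0 →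
      |z.im - Real.sqrt (β / α) * Real.sqrt μ| < ε * Real.sqrt μ := by
  intro ε hε
  set C := 3 * ((β - α) / (2 * α * β)) ^ 2 + 2 * ((β - α) / (2 * α * β)) / α
  set s := Real.sqrt (β / α)
  have hs : 0 < s := Real.sqrt_pos.mpr (div_pos (hα.trans hαβ) hα)
  refine ⟨max 1 (C / (ε * s)), lt_max_of_lt_left one_pos, fun μ hμ z hy hz ↦ ?_⟩
  have hμ0 : 0 < μ := lt_of_lt_of_le one_pos ((le_max_left _ _).trans hμ.le)
  have hCμ : C < ε * s * μ :=
    (div_lt_iff₀' (by positivity)).mp ((le_max_right _ _).trans_lt hμ)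
  have hu : (s * Real.sqrt μ) ^ 2 = β / α * μ := by
    rw [mul_pow, Real.sq_sqrt (div_pos (hα.trans hαβ) hα).le, Real.sq_sqrt hμ0.le]
  calc |z.im - s * Real.sqrt μ|
      ≤ |z.im ^ 2 - (s * Real.sqrt μ) ^ 2| / (s * Real.sqrt μ) :=
        abs_sub_le_abs_sq_sub_div hy.le (by positivity)
    _ ≤ C / (s * Real.sqrt μ) := by
        rw [hu]
        gcongr
        exact abs_im_sq_sub_le_of_cubic_root hα hαβ hμ0 hz hy.ne'
    _ < ε * Real.sqrt μ := by
        rw [div_lt_iff₀ (by positivity)]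
        calc C < ε * s * μ := hCμ
          _ = ε * Real.sqrt μ * (s * Real.sqrt μ) := by
            linear_combination (-(ε * s)) * Real.mul_self_sqrt hμ0.le
end

section
/- Let α, β be real numbers with 1/3 ≤ α/β < 1, let 0 < μ₁ ≤ μ, and let λ* be a nonreal complex root of p_{μ₁}(λ) = αλ³ + λ² + βμ₁λ + μ₁. Then every complex root λ of p_μ(λ) = αλ³ + λ² + βμλ + μ satisfies Re(λ) ≤ Re(λ*). (In this regime the nonreal roots associated to the smallest μ are dominant, and Re(λ*) > −1/β.) -/
lemma keyB (α β μ x : ℝ) (hα : 0 < α) (hab : α < β) (hμ : 0 < μ)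
    (hF : 2*x*(2*α*x+1)^2 + μ*(2*α*β*x+β-α) = 0) :
    0 < 2*α*β*x + β - α := by
  by_contra h
  push_neg at h
  have hβ : 0 < β := hα.trans hab
  have hx : x < 0 := by nlinarith [mul_pos hα hβ]
  have e2 : μ*(2*α*β*x+β-α) ≤ 0 := mul_nonpos_of_nonneg_of_nonpos hμ.le h
  have e1 : x*(2*α*x+1)^2 ≤ 0 := mul_nonpos_of_nonpos_of_nonneg hx.le (sq_nonneg _)
  have e3 : μ*(2*α*β*x+β-α) = 0 := by nlinarith
  have e4 : 2*α*β*x+β-α = 0 := by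
    rcases mul_eq_zero.mp e3 with h'|h'
    · exact absurd h' hμ.ne'
    · exact h'
  have e5 : x*(2*α*x+1)^2 = 0 := by nlinarith
  have e6 : (2*α*x+1)^2 = 0 := by
    rcases mul_eq_zero.mp e5 with h'|h'
    · exact absurd h' hx.ne
    · exact h'
  have e7 : 2*α*x+1 = 0 := sq_eq_zero_iff.mp e6
  have : α = 0 := by linear_combination β*e7 - e4
  exact absurd this hα.ne'

lemma keyC (α β μ₁ μ x a : ℝ) (hα : 0 < α) (hβ : 0 < β) (hab : α < β) (h3 : β ≤ 3*α)
    (hμ₁ : 0 < μ₁) (hμ : μ₁ ≤ μ)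
    (hFx : 2*x*(2*α*x+1)^2 + μ*(2*α*β*x+β-α) = 0)
    (hFa : 2*a*(2*α*a+1)^2 + μ₁*(2*α*β*a+β-α) = 0) :
    x ≤ a := by
  have hdx := keyB α β μ x hα hab (lt_of_lt_of_le hμ₁ hμ) hFx
  have hda := keyB α β μ₁ a hα hab hμ₁ hFa
  have hlin : 0 ≤ 2*α*β*(x+a) + β + α := by nlinarith
  have hP : 0 < (β-α)*α^2 + (2*α*β*x+β-α)*(2*α*β*a+β-α)*(2*α*β*(x+a)+β+α) := by
    nlinarith [mul_nonneg (mul_pos hdx hda).le hlin, mul_pos (mul_pos hα hα) (sub_pos.mpr hab)]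
  have hkey : (μ-μ₁)*((2*α*β*x+β-α)*(2*α*β*a+β-α)) * β^2 =
      (a-x) * (2*((β-α)*α^2 + (2*α*β*x+β-α)*(2*α*β*a+β-α)*(2*α*β*(x+a)+β+α))) := by
    linear_combination (β^2*(2*α*β*a+β-α)) * hFx - (β^2*(2*α*β*x+β-α)) * hFa
  nlinarith [mul_nonneg (sub_nonneg.mpr hμ) (mul_pos hdx hda).le, mul_pos (mul_pos hβ hβ) hP]

lemma real_root_neg (α β μ r : ℝ) (hα : 0 < α) (hβ : 0 < β) (hab : α < β) (hμ : 0 < μ)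
    (h : α*r^3 + r^2 + β*μ*r + μ = 0) : β*r + 1 < 0 := by
  by_contra h'
  push_neg at h'
  have h1 : 0 < α*r + 1 := by nlinarith
  have h2 : r^2 * (α*r+1) = -(μ*(β*r+1)) := by linear_combination h
  have h3 : μ * (β*r+1) = 0 := by
    nlinarith [mul_nonneg (sq_nonneg r) h1.le, mul_nonneg hμ.le h']
  have h4 : β*r+1 = 0 := by
    rcases mul_eq_zero.mp h3 with h''|h''
    · exact absurd h'' hμ.ne'
    · exact h''
  have h5 : r^2*(α*r+1) = 0 := by rw [h2, h3, neg_zero]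
  rcases mul_eq_zero.mp h5 with h6|h6
  · have hr0 : r = 0 := sq_eq_zero_iff.mp h6
    rw [hr0] at h4
    norm_num at h4
  · have : β = α := by linear_combination β*h6 - α*h4
    linarith

lemma extract_parts (α β μ : ℝ) (z : ℂ)
    (heq : (α : ℂ) * z ^ 3 + z ^ 2 + (β : ℂ) * (μ : ℂ) * z + (μ : ℂ) = 0) :
    α*z.re^3 - 3*α*z.re*z.im^2 + z.re^2 - z.im^2 + β*μ*z.re + μ = 0 ∧
    z.im * (3*α*z.re^2 - α*z.im^2 + 2*z.re + β*μ) = 0 := by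
  have hre := congrArg Complex.re heq
  have him := congrArg Complex.im heq
  simp only [Complex.add_re, Complex.add_im, Complex.mul_re, Complex.mul_im,
    Complex.ofReal_re, Complex.ofReal_im, Complex.zero_re, Complex.zero_im,
    pow_succ, pow_zero, one_mul, Complex.one_re, Complex.one_im] at hre him
  exact ⟨by linear_combination hre, by linear_combination him⟩

/-- For `1/3 ≤ α/β < 1` (with `α, β > 0`), `0 < μ₁ ≤ μ`, and `λ*` a
nonreal root of `αλ³ + λ² + βμ₁λ + μ₁`, every complex root `λ` of
`αλ³ + λ² + βμλ + μ` satisfies `Re(λ) ≤ Re(λ*)`; moreover `Re(λ*) > −1/β`. -/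
theorem stmt_14 (α β : ℝ) (hα : 0 < α) (hβ : 0 < β)
    (h1 : 1 / 3 ≤ α / β) (h2 : α / β < 1)
    (μ₁ μ : ℝ) (hμ₁ : 0 < μ₁) (hμ : μ₁ ≤ μ)
    (lstar : ℂ) (him : lstar.im ≠ 0)
    (hstar : (α : ℂ) * lstar ^ 3 + lstar ^ 2 + (β : ℂ) * (μ₁ : ℂ) * lstar + (μ₁ : ℂ) = 0) :
    (∀ z : ℂ, (α : ℂ) * z ^ 3 + z ^ 2 + (β : ℂ) * (μ : ℂ) * z + (μ : ℂ) = 0 →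
      z.re ≤ lstar.re) ∧ -1 / β < lstar.re := by
  have hβ3 : β ≤ 3*α := by
    rw [div_le_div_iff₀ (by norm_num) hβ] at h1; linarith
  have hab : α < β := by
    rw [div_lt_one hβ] at h2; exact h2
  obtain ⟨hre1, him1⟩ := extract_parts α β μ₁ lstar hstar
  have E0 : α*lstar.im^2 - (3*α*lstar.re^2 + 2*lstar.re + β*μ₁) = 0 := by
    rcases mul_eq_zero.mp him1 with h'|h'
    · exact absurd h' him
    · linarith
  have hFa : 2*lstar.re*(2*α*lstar.re+1)^2 + μ₁*(2*α*β*lstar.re+β-α) = 0 := by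
    linear_combination (-α)*hre1 - (3*α*lstar.re+1)*E0
  have hda := keyB α β μ₁ lstar.re hα hab hμ₁ hFa
  have hmain : -1/β < lstar.re := by
    rw [div_lt_iff₀ hβ]
    nlinarith
  refine ⟨fun z hz => ?_, hmain⟩
  obtain ⟨hre2, him2⟩ := extract_parts α β μ z hz
  by_cases hzim : z.im = 0
  · rw [hzim] at hre2
    have hR : α*z.re^3 + z.re^2 + β*μ*z.re + μ = 0 := by linear_combination hre2
    have := real_root_neg α β μ z.re hα hβ hab (hμ₁.trans_le hμ) hR
    have : z.re < -1/β := by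
      rw [lt_div_iff₀ hβ] at *
      nlinarith
    linarith
  · have E0' : α*z.im^2 - (3*α*z.re^2 + 2*z.re + β*μ) = 0 := by
      rcases mul_eq_zero.mp him2 with h'|h'
      · exact absurd h' hzim
      · linarith
    have hFx : 2*z.re*(2*α*z.re+1)^2 + μ*(2*α*β*z.re+β-α) = 0 := by
      linear_combination (-α)*hre2 - (3*α*z.re+1)*E0'
    exact keyC α β μ₁ μ z.re lstar.re hα hβ hab hβ3 hμ₁ hμ hFx hFa
end

section
/- Let α, β be real numbers with 0 < α/β < 1/3. Then there exists M > 0 such that for every μ ≥ M, every complex root λ of p_μ(λ) = αλ³ + λ² + βμλ + μ satisfies Re(λ) < −1/β. (Hence if the smallest eigenvalue μ₁ of L is large enough, the dominant spectrum of the generator is {−1/β}.) -/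
/-- Routh–Hurwitz for a cubic: if `a,b,c,d > 0` and `a*d < b*c` then every complex
root of `a w³ + b w² + c w + d` has negative real part. -/
lemma cubic_re_neg (a b c d : ℝ) (ha : 0 < a) (hb : 0 < b) (hc : 0 < c) (hd : 0 < d)
    (hbc : a * d < b * c) (w : ℂ)
    (heq : (a:ℂ)*w^3 + (b:ℂ)*w^2 + (c:ℂ)*w + (d:ℂ) = 0) : w.re < 0 := by
  set x := w.re with hx
  set y := w.im with hy
  have hparts : a*(x^3 - 3*x*y^2) + b*(x^2 - y^2) + c*x + d = 0 ∧
      a*(3*x^2*y - y^3) + b*(2*x*y) + c*y = 0 := by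
    rw [Complex.ext_iff] at heq
    simp only [Complex.add_re, Complex.add_im, Complex.mul_re, Complex.mul_im,
      Complex.ofReal_re, Complex.ofReal_im, Complex.zero_re, Complex.zero_im,
      pow_succ, pow_zero, one_mul] at heq
    obtain ⟨h1, h2⟩ := heq
    constructor <;> linarith [h1, h2]
  obtain ⟨h1, h2⟩ := hparts
  by_contra hx0
  push_neg at hx0
  rcases eq_or_ne y 0 with hy0 | hy0
  · rw [hy0] at h1
    nlinarith [mul_nonneg ha.le (pow_nonneg hx0 3), mul_nonneg hb.le (sq_nonneg x),
      mul_nonneg hc.le hx0]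
  · have hE2 : a*y^2 = 3*a*x^2 + 2*b*x + c := by
      have h2' : y * (3*a*x^2 - a*y^2 + 2*b*x + c) = 0 := by linear_combination h2
      have := (mul_eq_zero.mp h2').resolve_left hy0
      linarith
    have key : b*c - a*d = -(8*a^2*x^3 + 8*a*b*x^2 + 2*(a*c + b^2)*x) := by
      linear_combination (-a) * h1 + (-(3*a*x + b)) * hE2
    nlinarith [key, mul_nonneg (mul_nonneg (mul_pos ha ha).le hx0) (mul_nonneg hx0 hx0),
      mul_nonneg (mul_nonneg (mul_pos ha hb).le hx0) hx0,
      mul_nonneg (mul_pos ha hc).le hx0, mul_nonneg (mul_pos hb hb).le hx0]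

/-- For `0 < α/β < 1/3` (with `α, β > 0`), there exists `M > 0` such
that for every `μ ≥ M`, every complex root `λ` of `αλ³ + λ² + βμλ + μ` satisfies
`Re(λ) < −1/β`. -/
theorem stmt_15 (α β : ℝ) (hα : 0 < α) (hβ : 0 < β) (h : α / β < 1 / 3) :
    ∃ M > 0, ∀ μ : ℝ, M ≤ μ → ∀ z : ℂ,
      (α : ℂ) * z ^ 3 + z ^ 2 + (β : ℂ) * (μ : ℂ) * z + (μ : ℂ) = 0 →
      z.re < -1 / β := by
  have hb : 0 < β - 3*α := by
    rw [div_lt_div_iff₀ hβ (by norm_num : (0:ℝ) < 3)] at h; linarith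
  refine ⟨(2*β*(β-3*α) + α*β + 1)/((β-3*α)*β^3), by positivity, ?_⟩
  intro μ hμ z hz
  have hM : 2*β*(β-3*α) + α*β + 1 ≤ (β-3*α)*β^3*μ := by
    rw [div_le_iff₀ (by positivity)] at hμ
    nlinarith [hμ]
  have hd : 0 < β - α := by linarith
  have hbc : α*(β-α) < (β-3*α)*(β^3*μ + 3*α - 2*β) := by
    nlinarith [hM, mul_pos hα hb, sq_nonneg α]
  have hc : 0 < β^3*μ + 3*α - 2*β := by
    nlinarith [mul_pos hα hd, hbc, hb]
  have heqw : (α:ℂ)*((β:ℂ)*z+1)^3 + ((β-3*α:ℝ):ℂ)*((β:ℂ)*z+1)^2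
      + ((β^3*μ + 3*α - 2*β:ℝ):ℂ)*((β:ℂ)*z+1) + ((β-α:ℝ):ℂ) = 0 := by
    push_cast
    linear_combination (β:ℂ)^3 * hz
  have hre := cubic_re_neg α (β-3*α) (β^3*μ + 3*α - 2*β) (β-α) hα hb hc hd hbc
    ((β:ℂ)*z+1) heqw
  have hre' : β * z.re + 1 < 0 := by
    simpa using hre
  have h1β : β * (-1/β) = -1 := by field_simp
  have : β * z.re < β * (-1/β) := by rw [h1β]; linarith
  exact lt_of_mul_lt_mul_left this hβ.le
end

section
/- Let α, β, μ be real numbers with 0 < α < β and μ > 0, and suppose the cubic p(λ) = αλ³ + λ² + βμλ + μ has three distinct complex roots. Let σ be the maximum of the real parts of the roots of p. Then σ < 0, and every three-times differentiable function z : ℝ → ℂ satisfying α z'''(t) + z''(t) + βμ z'(t) + μ z(t) = 0 for all t admits a constant C ≥ 0 such that |z(t)| ≤ C·e^{σt} for all t ≥ 0. -/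
/-! Every root of `p` has negative real part by the Routh–Hurwitz criterion for a cubic with
nonnegative coefficients, which here reads `α · μ < 1 · βμ`. Since the roots `w₁, w₂, w₃` are
distinct, `p(D) = α (D - w₁)(D - w₂)(D - w₃)`, so `uᵢ = (D - wⱼ)(D - wₖ) z` solves `uᵢ' = wᵢ uᵢ`
and is a multiple of `e^{wᵢ t}`. Lagrange interpolation of `1` at the roots writes `z` as a
combination of the `uᵢ`, hence of the three exponentials, each bounded by `e^{σ t}`. -/

open Complex

theorem re_neg_of_cubic_root {a₃ a₂ a₁ a₀ : ℝ} (h₃ : 0 ≤ a₃) (h₂ : 0 ≤ a₂) (h₁ : 0 ≤ a₁)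
    (h₀ : 0 < a₀) (hurwitz : a₃ * a₀ < a₂ * a₁) {w : ℂ}
    (hw : (a₃ : ℂ) * w ^ 3 + a₂ * w ^ 2 + a₁ * w + a₀ = 0) : w.re < 0 := by
  obtain ⟨x, y⟩ := w
  have hre := congrArg Complex.re hw
  have him := congrArg Complex.im hw
  simp only [pow_succ, pow_zero, one_mul, add_re, add_im, mul_re, mul_im, ofReal_re, ofReal_im,
    zero_re, zero_im] at hre him
  ring_nf at hre him
  by_contra! hx
  dsimp only at hx
  rcases eq_or_ne y 0 with rfl | hy
  · nlinarith [mul_nonneg h₃ (pow_nonneg hx 3), mul_nonneg h₂ (sq_nonneg x), mul_nonneg h₁ hx]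
  · have him' : a₃ * y ^ 2 = 3 * a₃ * x ^ 2 + 2 * a₂ * x + a₁ := by
      have : y * (3 * a₃ * x ^ 2 - a₃ * y ^ 2 + 2 * a₂ * x + a₁) = 0 := by linear_combination him
      linear_combination -(mul_eq_zero.mp this).resolve_left hy
    -- the positive constant term is where the Hurwitz condition enters
    have hsum : 8 * a₃ ^ 2 * x ^ 3 + 8 * a₂ * a₃ * x ^ 2 + 2 * (a₁ * a₃ + a₂ ^ 2) * x
        + (a₂ * a₁ - a₃ * a₀) = 0 := by
      linear_combination -a₃ * hre - (3 * a₃ * x + a₂) * him'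
    nlinarith [mul_nonneg (sq_nonneg a₃) (pow_nonneg hx 3),
      mul_nonneg (mul_nonneg h₂ h₃) (sq_nonneg x),
      mul_nonneg (add_nonneg (mul_nonneg h₁ h₃) (sq_nonneg a₂)) hx]

theorem hasDerivAt_cexp_mul_ofReal (b : ℂ) (t : ℝ) :
    HasDerivAt (fun s : ℝ => cexp (b * s)) (b * cexp (b * t)) t := by
  simpa [mul_comm] using ((ofRealCLM.hasDerivAt (x := t)).const_mul b).cexp

theorem eq_mul_cexp_of_hasDerivAt {a : ℂ} {f f' : ℝ → ℂ} (hf : ∀ t, HasDerivAt f (f' t) t)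
    (hf' : ∀ t, f' t = a * f t) (t : ℝ) : f t = f 0 * cexp (a * t) := by
  have hderiv : ∀ s, HasDerivAt (fun s => f s * cexp (-a * s)) 0 s := fun s =>
    ((hf s).mul (hasDerivAt_cexp_mul_ofReal (-a) s)).congr_deriv (by rw [hf' s]; ring)
  have hconst := is_const_of_deriv_eq_zero (fun s => (hderiv s).differentiableAt)
    (fun s => (hderiv s).deriv) t 0
  simp only [ofReal_zero, mul_zero, Complex.exp_zero, mul_one] at hconst
  rw [← hconst, mul_assoc, ← Complex.exp_add, neg_mul, neg_add_cancel, Complex.exp_zero, mul_one]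

theorem cubic_vieta_of_distinct_roots {R : Type*} [CommRing R] [NoZeroDivisors R]
    {a b c d w₁ w₂ w₃ : R}
    (h₁₂ : w₁ ≠ w₂) (h₁₃ : w₁ ≠ w₃) (h₂₃ : w₂ ≠ w₃)
    (e₁ : a * w₁ ^ 3 + b * w₁ ^ 2 + c * w₁ + d = 0)
    (e₂ : a * w₂ ^ 3 + b * w₂ ^ 2 + c * w₂ + d = 0)
    (e₃ : a * w₃ ^ 3 + b * w₃ ^ 2 + c * w₃ + d = 0) :
    b = -a * (w₁ + w₂ + w₃) ∧ c = a * (w₁ * w₂ + w₁ * w₃ + w₂ * w₃) ∧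
      d = -a * (w₁ * w₂ * w₃) := by
  have g₁₂ : a * (w₁ ^ 2 + w₁ * w₂ + w₂ ^ 2) + b * (w₁ + w₂) + c = 0 :=
    (mul_eq_zero.mp (by linear_combination e₁ - e₂ :
      (w₁ - w₂) * (a * (w₁ ^ 2 + w₁ * w₂ + w₂ ^ 2) + b * (w₁ + w₂) + c) = 0)).resolve_left
      (sub_ne_zero.mpr h₁₂)
  have g₁₃ : a * (w₁ ^ 2 + w₁ * w₃ + w₃ ^ 2) + b * (w₁ + w₃) + c = 0 :=
    (mul_eq_zero.mp (by linear_combination e₁ - e₃ :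
      (w₁ - w₃) * (a * (w₁ ^ 2 + w₁ * w₃ + w₃ ^ 2) + b * (w₁ + w₃) + c) = 0)).resolve_left
      (sub_ne_zero.mpr h₁₃)
  have hb : a * (w₁ + w₂ + w₃) + b = 0 :=
    (mul_eq_zero.mp (by linear_combination g₁₂ - g₁₃ :
      (w₂ - w₃) * (a * (w₁ + w₂ + w₃) + b) = 0)).resolve_left (sub_ne_zero.mpr h₂₃)
  have hc : c = a * (w₁ * w₂ + w₁ * w₃ + w₂ * w₃) := by linear_combination g₁₂ - (w₁ + w₂) * hb
  refine ⟨by linear_combination hb, hc, ?_⟩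
  linear_combination e₁ - w₁ ^ 2 * hb - w₁ * hc

theorem factor_eq_mul_cexp {w₁ w₂ w₃ : ℂ} {z z₁ z₂ z₃ : ℝ → ℂ}
    (hz : ∀ t, HasDerivAt z (z₁ t) t) (hz₁ : ∀ t, HasDerivAt z₁ (z₂ t) t)
    (hz₂ : ∀ t, HasDerivAt z₂ (z₃ t) t)
    (hode : ∀ t, z₃ t - (w₁ + w₂ + w₃) * z₂ t + (w₁ * w₂ + w₁ * w₃ + w₂ * w₃) * z₁ t
      - w₁ * w₂ * w₃ * z t = 0) (t : ℝ) :
    z₂ t - (w₂ + w₃) * z₁ t + w₂ * w₃ * z t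
      = (z₂ 0 - (w₂ + w₃) * z₁ 0 + w₂ * w₃ * z 0) * cexp (w₁ * t) :=
  eq_mul_cexp_of_hasDerivAt (f := fun t => z₂ t - (w₂ + w₃) * z₁ t + w₂ * w₃ * z t)
    (fun t => ((hz₂ t).sub ((hz₁ t).const_mul _)).add ((hz t).const_mul _))
    (fun t => by linear_combination hode t) t

theorem exists_eq_sum_cexp_of_cubic_ode {a b c d w₁ w₂ w₃ : ℂ} (ha : a ≠ 0)
    (h₁₂ : w₁ ≠ w₂) (h₁₃ : w₁ ≠ w₃) (h₂₃ : w₂ ≠ w₃)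
    (e₁ : a * w₁ ^ 3 + b * w₁ ^ 2 + c * w₁ + d = 0)
    (e₂ : a * w₂ ^ 3 + b * w₂ ^ 2 + c * w₂ + d = 0)
    (e₃ : a * w₃ ^ 3 + b * w₃ ^ 2 + c * w₃ + d = 0)
    {z z₁ z₂ z₃ : ℝ → ℂ} (hz : ∀ t, HasDerivAt z (z₁ t) t) (hz₁ : ∀ t, HasDerivAt z₁ (z₂ t) t)
    (hz₂ : ∀ t, HasDerivAt z₂ (z₃ t) t)
    (hode : ∀ t, a * z₃ t + b * z₂ t + c * z₁ t + d * z t = 0) :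
    ∃ c₁ c₂ c₃ : ℂ, ∀ t : ℝ,
      z t = c₁ * cexp (w₁ * t) + c₂ * cexp (w₂ * t) + c₃ * cexp (w₃ * t) := by
  obtain ⟨rfl, rfl, rfl⟩ := cubic_vieta_of_distinct_roots h₁₂ h₁₃ h₂₃ e₁ e₂ e₃
  have hmonic : ∀ t, z₃ t - (w₁ + w₂ + w₃) * z₂ t + (w₁ * w₂ + w₁ * w₃ + w₂ * w₃) * z₁ t
      - w₁ * w₂ * w₃ * z t = 0 := fun t =>
    (mul_eq_zero.mp (by linear_combination hode t)).resolve_left ha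
  have hu₁ := factor_eq_mul_cexp hz hz₁ hz₂ hmonic
  have hu₂ := factor_eq_mul_cexp (w₁ := w₂) (w₂ := w₁) (w₃ := w₃) hz hz₁ hz₂
    (fun t => by linear_combination hmonic t)
  have hu₃ := factor_eq_mul_cexp (w₁ := w₃) (w₂ := w₁) (w₃ := w₂) hz hz₁ hz₂
    (fun t => by linear_combination hmonic t)
  have d₁₂ := sub_ne_zero.mpr h₁₂
  have d₁₃ := sub_ne_zero.mpr h₁₃
  have d₂₃ := sub_ne_zero.mpr h₂₃
  have lagrange : ∀ p q r : ℂ, r = (p - (w₂ + w₃) * q + w₂ * w₃ * r) / ((w₁ - w₂) * (w₁ - w₃))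
      + (p - (w₁ + w₃) * q + w₁ * w₃ * r) / ((w₂ - w₁) * (w₂ - w₃))
      + (p - (w₁ + w₂) * q + w₁ * w₂ * r) / ((w₃ - w₁) * (w₃ - w₂)) := by
    intro p q r
    field_simp
    ring
  refine ⟨(z₂ 0 - (w₂ + w₃) * z₁ 0 + w₂ * w₃ * z 0) / ((w₁ - w₂) * (w₁ - w₃)),
    (z₂ 0 - (w₁ + w₃) * z₁ 0 + w₁ * w₃ * z 0) / ((w₂ - w₁) * (w₂ - w₃)),
    (z₂ 0 - (w₁ + w₂) * z₁ 0 + w₁ * w₂ * z 0) / ((w₃ - w₁) * (w₃ - w₂)), fun t => ?_⟩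
  rw [lagrange (z₂ t) (z₁ t) (z t), hu₁, hu₂, hu₃]
  ring

theorem norm_mul_cexp_le {c w : ℂ} {σ t : ℝ} (hw : w.re ≤ σ) (ht : 0 ≤ t) :
    ‖c * cexp (w * t)‖ ≤ ‖c‖ * Real.exp (σ * t) := by
  rw [norm_mul, norm_exp, re_mul_ofReal]
  gcongr

/-- For `0 < α < β`, `μ > 0`, suppose the cubic
`p(λ) = αλ³ + λ² + βμλ + μ` has three distinct complex roots, and let `σ` be the
maximum of the real parts of the roots of `p`. Then `σ < 0`, and every three-times
differentiable `z : ℝ → ℂ` satisfying `αz''' + z'' + βμz' + μz = 0` admits `C ≥ 0`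
with `|z(t)| ≤ C·e^{σt}` for all `t ≥ 0`. -/
theorem stmt_19 (α β μ : ℝ) (hα : 0 < α) (hαβ : α < β) (hμ : 0 < μ)
    (hdistinct : ∃ w₁ w₂ w₃ : ℂ, w₁ ≠ w₂ ∧ w₁ ≠ w₃ ∧ w₂ ≠ w₃ ∧
      (α : ℂ) * w₁ ^ 3 + w₁ ^ 2 + (β : ℂ) * (μ : ℂ) * w₁ + (μ : ℂ) = 0 ∧
      (α : ℂ) * w₂ ^ 3 + w₂ ^ 2 + (β : ℂ) * (μ : ℂ) * w₂ + (μ : ℂ) = 0 ∧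
      (α : ℂ) * w₃ ^ 3 + w₃ ^ 2 + (β : ℂ) * (μ : ℂ) * w₃ + (μ : ℂ) = 0)
    (σ : ℝ)
    (hmax : ∀ w : ℂ, (α : ℂ) * w ^ 3 + w ^ 2 + (β : ℂ) * (μ : ℂ) * w + (μ : ℂ) = 0 →
      w.re ≤ σ)
    (hatt : ∃ w : ℂ, (α : ℂ) * w ^ 3 + w ^ 2 + (β : ℂ) * (μ : ℂ) * w + (μ : ℂ) = 0 ∧
      w.re = σ) :
    σ < 0 ∧
    ∀ (z z₁ z₂ z₃ : ℝ → ℂ),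
      (∀ t : ℝ, HasDerivAt z (z₁ t) t) →
      (∀ t : ℝ, HasDerivAt z₁ (z₂ t) t) →
      (∀ t : ℝ, HasDerivAt z₂ (z₃ t) t) →
      (∀ t : ℝ, (α : ℂ) * z₃ t + z₂ t + (β : ℂ) * (μ : ℂ) * z₁ t + (μ : ℂ) * z t = 0) →
      ∃ C : ℝ, 0 ≤ C ∧ ∀ t : ℝ, 0 ≤ t → ‖z t‖ ≤ C * Real.exp (σ * t) := by
  refine ⟨?_, fun z z₁ z₂ z₃ hz hz₁ hz₂ hode => ?_⟩
  · obtain ⟨w, hw, rfl⟩ := hatt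
    refine re_neg_of_cubic_root (a₂ := 1) (a₁ := β * μ) hα.le zero_le_one
      (mul_pos (hα.trans hαβ) hμ).le hμ (by simpa using mul_lt_mul_of_pos_right hαβ hμ) ?_
    push_cast
    linear_combination hw
  obtain ⟨w₁, w₂, w₃, h₁₂, h₁₃, h₂₃, e₁, e₂, e₃⟩ := hdistinct
  obtain ⟨c₁, c₂, c₃, hzc⟩ :=
    exists_eq_sum_cexp_of_cubic_ode (a := α) (b := 1) (c := β * μ) (d := μ)
      (ofReal_ne_zero.mpr hα.ne') h₁₂ h₁₃ h₂₃
      (by linear_combination e₁) (by linear_combination e₂) (by linear_combination e₃)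
      hz hz₁ hz₂ (fun t => by linear_combination hode t)
  refine ⟨‖c₁‖ + ‖c₂‖ + ‖c₃‖, by positivity, fun t ht => ?_⟩
  calc ‖z t‖
      ≤ ‖c₁ * cexp (w₁ * t)‖ + ‖c₂ * cexp (w₂ * t)‖ + ‖c₃ * cexp (w₃ * t)‖ :=
        hzc t ▸ norm_add₃_le
    _ ≤ ‖c₁‖ * Real.exp (σ * t) + ‖c₂‖ * Real.exp (σ * t) + ‖c₃‖ * Real.exp (σ * t) :=
        add_le_add_three (norm_mul_cexp_le (hmax _ e₁) ht) (norm_mul_cexp_le (hmax _ e₂) ht)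
          (norm_mul_cexp_le (hmax _ e₃) ht)
    _ = (‖c₁‖ + ‖c₂‖ + ‖c₃‖) * Real.exp (σ * t) := by ring
end
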